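/- arXiv:2112.03436 — 11 statements merged into one kernel-verified Lean document; each statement's English description precedes it below -/
import Mathlib

section
/- Let Λ, γ_r, γ_s be nonnegative reals, ν_r > 0, and Λ + γ_r > 0. Define s_dfe = ( sqrt(4·ν_r·(Λ + γ_r) + (Λ + γ_r + γ_s − ν_r)²) − (Λ + γ_r + γ_s − ν_r) ) / (2·ν_r). Then s_dfe is a root of the quadratic q(s) = ν_r·s² + (Λ + γ_r + γ_s − ν_r)·s − (Λ + γ_r), s_dfe belongs to (0, 1], the other root of q is strictly negative, and hence s_dfe is the unique root of q in [0, 1]. -/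
/-- The disease-free equilibrium of the scaled SIR-PH model with ν_r > 0:
s_dfe is a root of the quadratic q(s) = ν_r s² + (Λ+γ_r+γ_s−ν_r)s − (Λ+γ_r),
lies in (0,1], the other root is strictly negative, and s_dfe is the unique
root of q in [0,1]. -/
theorem stmt1 (Λ γr γs νr : ℝ) (hΛ : 0 ≤ Λ) (hγr : 0 ≤ γr) (hγs : 0 ≤ γs)
    (hνr : 0 < νr) (hpos : 0 < Λ + γr)
    (sdfe : ℝ)
    (hsdfe : sdfe = (Real.sqrt (4 * νr * (Λ + γr) + (Λ + γr + γs - νr) ^ 2)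
        - (Λ + γr + γs - νr)) / (2 * νr))
    (q : ℝ → ℝ)
    (hq : q = fun s => νr * s ^ 2 + (Λ + γr + γs - νr) * s - (Λ + γr)) :
    q sdfe = 0 ∧ sdfe ∈ Set.Ioc (0 : ℝ) 1 ∧
    (-(Λ + γr + γs - νr) - Real.sqrt (4 * νr * (Λ + γr) + (Λ + γr + γs - νr) ^ 2))
        / (2 * νr) < 0 ∧
    q ((-(Λ + γr + γs - νr)
        - Real.sqrt (4 * νr * (Λ + γr) + (Λ + γr + γs - νr) ^ 2)) / (2 * νr)) = 0 ∧
    ∀ s ∈ Set.Icc (0 : ℝ) 1, q s = 0 → s = sdfe := by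
  subst hq
  set b := Λ + γr + γs - νr with hb
  set D := 4 * νr * (Λ + γr) + b ^ 2 with hD
  have hDnn : 0 ≤ D := by positivity
  set s0 := Real.sqrt D with hs0
  have hsq : s0 ^ 2 = D := Real.sq_sqrt hDnn
  have hsnn : 0 ≤ s0 := Real.sqrt_nonneg _
  have hbs : b < s0 := by nlinarith [mul_pos hνr hpos]
  have hnbs : -b < s0 := by nlinarith [mul_pos hνr hpos]
  have hroot : νr * sdfe ^ 2 + b * sdfe - (Λ + γr) = 0 := by
    rw [hsdfe]
    field_simp
    nlinarith [hsq]
  refine ⟨hroot, ⟨?_, ?_⟩, ?_, ?_, ?_⟩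
  · rw [hsdfe]
    exact div_pos (by linarith) (by positivity)
  · rw [hsdfe, div_le_one (by positivity)]
    have hle : s0 ≤ 2 * νr + b := by
      have h1 : 0 ≤ 2 * νr + b := by
        simp only [hb]; nlinarith
      nlinarith [hsq, mul_nonneg hνr.le hγs]
    linarith
  · apply div_neg_of_neg_of_pos
    · linarith
    · positivity
  · field_simp
    nlinarith [hsq]
  · intro s hs hqs
    have hsdfe2 : νr * sdfe = (s0 - b) / 2 := by
      rw [hsdfe]; field_simp
    have hqs' : νr * s ^ 2 + b * s - (Λ + γr) = 0 := hqs
    have hfac : (s - sdfe) * (νr * (s + sdfe) + b) = 0 := by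
      linear_combination hqs' - hroot
    have hpos2 : 0 < νr * (s + sdfe) + b := by
      have : νr * sdfe = (s0 - b) / 2 := hsdfe2
      nlinarith [hs.1, mul_nonneg hνr.le hs.1]
    have := mul_eq_zero.mp hfac
    rcases this with h | h
    · linarith
    · linarith
end

section
/- Let F and V be n×n real matrices such that every entry of F is nonnegative, V is invertible, every off-diagonal entry of V is nonpositive, and every entry of V⁻¹ is nonnegative. Then every complex eigenvalue of F − V has strictly negative real part if and only if every complex eigenvalue of F·V⁻¹ has absolute value strictly less than 1. -/
open Matrix Filter Topology
open scoped NNReal ENNReal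

namespace NGMaux

attribute [local instance] Matrix.linftyOpNormedAddCommGroup Matrix.linftyOpNormedRing
  Matrix.linftyOpNormedAlgebra

variable {n : ℕ}

local instance : CompleteSpace (Matrix (Fin n) (Fin n) ℂ) :=
  inferInstance

-- entry ≤ norm
lemma entry_nnnorm_le (M : Matrix (Fin n) (Fin n) ℂ) (i j) : ‖M i j‖₊ ≤ ‖M‖₊ := by
  rw [Matrix.linfty_opNNNorm_def]
  refine le_trans (Finset.single_le_sum (f := fun j => ‖M i j‖₊) (fun _ _ => zero_le)
    (Finset.mem_univ j)) (Finset.le_sup (f := fun i => ∑ j, ‖M i j‖₊) (Finset.mem_univ i))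

-- norm monotone under entrywise domination
lemma nnnorm_le_of_entry_le {A : Matrix (Fin n) (Fin n) ℂ} {B : Matrix (Fin n) (Fin n) ℂ}
    (h : ∀ i j, ‖A i j‖₊ ≤ ‖B i j‖₊) : ‖A‖₊ ≤ ‖B‖₊ := by
  rw [Matrix.linfty_opNNNorm_def, Matrix.linfty_opNNNorm_def]
  refine Finset.sup_mono_fun fun i _ => ?_
  exact Finset.sum_le_sum fun j _ => h i j

/-- complexification of a real matrix -/
def cx (M : Matrix (Fin n) (Fin n) ℝ) : Matrix (Fin n) (Fin n) ℂ := M.map Complex.ofReal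

lemma cx_apply (M : Matrix (Fin n) (Fin n) ℝ) (i j) : cx M i j = (M i j : ℂ) := rfl

lemma cx_add (A B : Matrix (Fin n) (Fin n) ℝ) : cx (A + B) = cx A + cx B := by
  ext i j; simp [cx_apply]

lemma cx_sub (A B : Matrix (Fin n) (Fin n) ℝ) : cx (A - B) = cx A - cx B := by
  ext i j; simp [cx_apply]

lemma cx_mul (A B : Matrix (Fin n) (Fin n) ℝ) : cx (A * B) = cx A * cx B := by
  ext i j; simp [cx_apply, Matrix.mul_apply]

lemma cx_one : cx (1 : Matrix (Fin n) (Fin n) ℝ) = 1 := by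
  ext i j; by_cases h : i = j <;> simp [cx_apply, Matrix.one_apply, h]

lemma cx_pow (A : Matrix (Fin n) (Fin n) ℝ) (k : ℕ) : cx (A ^ k) = cx A ^ k := by
  induction k with
  | zero => simpa using cx_one
  | succ k ih => rw [pow_succ, pow_succ, cx_mul, ih]

lemma cx_smul (r : ℝ) (M : Matrix (Fin n) (Fin n) ℝ) : cx (r • M) = (r : ℂ) • cx M := by
  ext i j; simp [cx_apply]

lemma cx_algebraMap (r : ℝ) :
    algebraMap ℂ (Matrix (Fin n) (Fin n) ℂ) (r : ℂ) = cx (r • 1) := by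
  rw [Algebra.algebraMap_eq_smul_one, cx_smul, cx_one]


-- entrywise nonneg/order on real matrices
def EntryNN (M : Matrix (Fin n) (Fin n) ℝ) : Prop := ∀ i j, 0 ≤ M i j

def EntryLE (A B : Matrix (Fin n) (Fin n) ℝ) : Prop := ∀ i j, A i j ≤ B i j

lemma EntryNN.mul {A B : Matrix (Fin n) (Fin n) ℝ} (hA : EntryNN A) (hB : EntryNN B) :
    EntryNN (A * B) := fun i j => by
  rw [Matrix.mul_apply]; exact Finset.sum_nonneg fun k _ => mul_nonneg (hA i k) (hB k j)

lemma EntryLE.mul {A A' B B' : Matrix (Fin n) (Fin n) ℝ} (hA : EntryNN A) (hB : EntryNN B)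
    (hAA : EntryLE A A') (hBB : EntryLE B B') : EntryLE (A * B) (A' * B') := fun i j => by
  rw [Matrix.mul_apply, Matrix.mul_apply]
  exact Finset.sum_le_sum fun k _ => mul_le_mul (hAA i k) (hBB k j) (hB k j)
    (le_trans (hA i k) (hAA i k))

lemma EntryNN.pow {A : Matrix (Fin n) (Fin n) ℝ} (hA : EntryNN A) (k : ℕ) : EntryNN (A ^ k) := by
  induction k with
  | zero => intro i j; by_cases h : i = j <;> simp [Matrix.one_apply, h]
  | succ k ih => rw [pow_succ]; exact ih.mul hA

lemma EntryLE.pow {A B : Matrix (Fin n) (Fin n) ℝ} (hA : EntryNN A) (hAB : EntryLE A B) (k : ℕ) :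
    EntryLE (A ^ k) (B ^ k) := by
  induction k with
  | zero => intro i j; simp
  | succ k ih => rw [pow_succ, pow_succ]; exact EntryLE.mul (hA.pow k) hA ih hAB

-- nnnorm of complexification dominated
lemma nnnorm_cx_le_of_dom {A : Matrix (Fin n) (Fin n) ℂ} {B : Matrix (Fin n) (Fin n) ℝ}
    (h : ∀ i j, ‖A i j‖ ≤ B i j) : ‖A‖₊ ≤ ‖cx B‖₊ := by
  refine nnnorm_le_of_entry_le fun i j => ?_
  rw [← NNReal.coe_le_coe]
  simpa [cx_apply, abs_of_nonneg (le_trans (norm_nonneg _) (h i j))] using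
    h i j

noncomputable def sr (M : Matrix (Fin n) (Fin n) ℝ) : ℝ≥0∞ := spectralRadius ℂ (cx M)

noncomputable def rho (M : Matrix (Fin n) (Fin n) ℝ) : ℝ := (sr M).toReal

section NE
variable [Nonempty (Fin n)]

lemma sr_ne_top (M : Matrix (Fin n) (Fin n) ℝ) : sr M ≠ ⊤ :=
  ne_top_of_le_ne_top ENNReal.coe_ne_top (spectrum.spectralRadius_le_nnnorm (cx M))

lemma coe_rho (M : Matrix (Fin n) (Fin n) ℝ) : ENNReal.ofReal (rho M) = sr M := by
  rw [rho, ENNReal.ofReal_toReal (sr_ne_top M)]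

lemma rho_nonneg (M : Matrix (Fin n) (Fin n) ℝ) : 0 ≤ rho M := ENNReal.toReal_nonneg

lemma sr_lt_iff {M : Matrix (Fin n) (Fin n) ℝ} {r : ℝ} : sr M < ENNReal.ofReal r ↔ rho M < r :=
  ENNReal.lt_ofReal_iff_toReal_lt (sr_ne_top M)

-- monotonicity of spectral radius (Gelfand)
lemma sr_mono {A B : Matrix (Fin n) (Fin n) ℝ} (hA : EntryNN A) (hAB : EntryLE A B) :
    sr A ≤ sr B := by
  refine le_of_tendsto_of_tendsto'
    (spectrum.pow_nnnorm_pow_one_div_tendsto_nhds_spectralRadius (cx A))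
    (spectrum.pow_nnnorm_pow_one_div_tendsto_nhds_spectralRadius (cx B)) fun k => ?_
  refine ENNReal.rpow_le_rpow ?_ (by positivity)
  rw [← cx_pow, ← cx_pow, ENNReal.coe_le_coe]
  refine nnnorm_le_of_entry_le fun i j => ?_
  rw [← NNReal.coe_le_coe]
  have h1 := (hA.pow k) i j
  have h2 := (hAB.pow hA k) i j
  simp only [cx_apply, coe_nnnorm, Complex.norm_real, Real.norm_eq_abs]
  rw [abs_of_nonneg h1, abs_of_nonneg (le_trans h1 h2)]
  exact h2

-- geometric norm bound above the spectral radius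
lemma exists_norm_bound (a : Matrix (Fin n) (Fin n) ℂ) {t : ℝ≥0}
    (h : spectralRadius ℂ a < t) : ∃ c : ℝ≥0, ∀ k, ‖a ^ k‖₊ ≤ c * t ^ k := by
  have ht : 0 < t := by
    rcases eq_or_lt_of_le (zero_le (a := t)) with h0 | h0
    · exfalso; rw [← h0] at h; simpa using lt_of_le_of_lt zero_le h
    · exact h0
  have hev := (spectrum.pow_nnnorm_pow_one_div_tendsto_nhds_spectralRadius a).eventually_lt_const h
  obtain ⟨K, hK⟩ := eventually_atTop.1 hev
  have key : ∀ k, K ≤ k → 1 ≤ k → ‖a ^ k‖₊ ≤ t ^ k := by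
    intro k hk hk1
    have h1 : ((‖a ^ k‖₊ : ℝ≥0∞) ^ (1 / k : ℝ)) ^ (k : ℝ) ≤ (t : ℝ≥0∞) ^ (k : ℝ) :=
      ENNReal.rpow_le_rpow (hK k hk).le (by positivity)
    have e1 : ((‖a ^ k‖₊ : ℝ≥0∞) ^ (1 / k : ℝ)) ^ (k : ℝ) = (‖a ^ k‖₊ : ℝ≥0∞) := by
      rw [← ENNReal.rpow_mul, one_div,
        inv_mul_cancel₀ (by exact_mod_cast Nat.one_le_iff_ne_zero.1 hk1 : (k : ℝ) ≠ 0),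
        ENNReal.rpow_one]
    have e2 : ((t : ℝ≥0∞)) ^ (k : ℝ) = ((t ^ k : ℝ≥0) : ℝ≥0∞) := by
      rw [← ENNReal.coe_rpow_of_nonneg t (by positivity), NNReal.rpow_natCast]
    rw [e1, e2, ENNReal.coe_le_coe] at h1
    exact h1
  refine ⟨max 1 ((Finset.range (K + 1)).sup fun k => ‖a ^ k‖₊ * (t ^ k)⁻¹), fun k => ?_⟩
  rcases lt_or_ge k (K + 1) with hk | hk
  · have : ‖a ^ k‖₊ = ‖a ^ k‖₊ * (t ^ k)⁻¹ * t ^ k := by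
      rw [mul_assoc, inv_mul_cancel₀ (by positivity), mul_one]
    rw [this]
    exact mul_le_mul_left
      ((Finset.le_sup (f := fun k => ‖a ^ k‖₊ * (t ^ k)⁻¹) (Finset.mem_range.2 hk)).trans
        (le_max_right 1 _)) _
  · calc ‖a ^ k‖₊ ≤ t ^ k := key k (by omega) (by omega)
    _ = 1 * t ^ k := (one_mul _).symm
    _ ≤ _ := mul_le_mul_left (le_max_left _ _) _

-- Neumann series for the resolvent beyond the spectral radius
lemma hasSum_resolvent (a : Matrix (Fin n) (Fin n) ℂ) {z : ℂ}
    (hz : spectralRadius ℂ a < ‖z‖₊) :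
    IsUnit (z • (1 : Matrix (Fin n) (Fin n) ℂ) - a) ∧
    HasSum (fun k => (z⁻¹) ^ (k + 1) • a ^ k)
      (Ring.inverse (z • (1 : Matrix (Fin n) (Fin n) ℂ) - a)) := by
  have hz0 : z ≠ 0 := by
    rintro rfl; simpa using lt_of_le_of_lt zero_le hz
  have hznn : ‖z‖₊ ≠ 0 := by simpa using hz0
  have hunit : IsUnit (z • (1 : Matrix (Fin n) (Fin n) ℂ) - a) := by
    have := spectrum.mem_resolventSet_of_spectralRadius_lt hz
    rw [spectrum.mem_resolventSet_iff] at this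
    rwa [Algebra.algebraMap_eq_smul_one] at this
  obtain ⟨t, ht1, ht2⟩ := ENNReal.lt_iff_exists_nnreal_btwn.1 hz
  rw [ENNReal.coe_lt_coe] at ht2
  obtain ⟨c, hc⟩ := exists_norm_bound a ht1
  set g : ℕ → Matrix (Fin n) (Fin n) ℂ := fun k => (z⁻¹) ^ k • a ^ k with hg
  have hq : (‖z‖₊)⁻¹ * t < 1 := by
    have h2 := mul_lt_mul_of_pos_left ht2 (pos_iff_ne_zero.2 (inv_ne_zero hznn))
    rwa [inv_mul_cancel₀ hznn] at h2
  have hgsumm : Summable g := by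
    refine Summable.of_nnnorm_bounded ((NNReal.summable_geometric hq).mul_left c) fun k => ?_
    rw [hg]
    calc ‖(z⁻¹) ^ k • a ^ k‖₊ = (‖z‖₊)⁻¹ ^ k * ‖a ^ k‖₊ := by
          rw [nnnorm_smul, nnnorm_pow, nnnorm_inv]
    _ ≤ (‖z‖₊)⁻¹ ^ k * (c * t ^ k) := mul_le_mul_right (hc k) _
    _ = c * ((‖z‖₊)⁻¹ * t) ^ k := by ring
  obtain ⟨S, hS⟩ := hgsumm
  have hg0 : g 0 = 1 := by simp [hg]
  have hterm : ∀ k, a * g k = z • g (k + 1) := by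
    intro k
    rw [hg]
    simp only [Matrix.mul_smul, smul_smul]
    rw [← pow_succ' a]
    congr 1
    rw [pow_succ' z⁻¹, ← mul_assoc, mul_inv_cancel₀ hz0, one_mul]
  have hterm' : ∀ k, g k * a = z • g (k + 1) := by
    intro k
    rw [← hterm, hg]
    simp only [Matrix.smul_mul, Matrix.mul_smul]
    rw [← pow_succ a, ← pow_succ' a]
  have htail : HasSum (fun k => g (k + 1)) (S - g 0) := by
    refine (hasSum_nat_add_iff 1).2 ?_
    simpa using hS
  have hmulS : a * S = z • (S - 1) := by
    have h1 : HasSum (fun k => a * g k) (a * S) := hS.mul_left a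
    have h2 : HasSum (fun k => z • g (k + 1)) (z • (S - g 0)) := htail.const_smul z
    have h3 := h1.unique (by simpa only [← hterm] using h2)
    rw [h3, hg0]
  have hSmul : S * a = z • (S - 1) := by
    have h1 : HasSum (fun k => g k * a) (S * a) := hS.mul_right a
    have h2 : HasSum (fun k => z • g (k + 1)) (z • (S - g 0)) := htail.const_smul z
    have := h1.unique (by simpa only [← hterm'] using h2)
    rw [this, hg0]
  set w := z⁻¹ • S with hw
  have huw : (z • (1 : Matrix (Fin n) (Fin n) ℂ) - a) * w = 1 := by
    rw [hw, Matrix.sub_mul, Matrix.smul_mul, Matrix.one_mul, smul_smul,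
      mul_inv_cancel₀ hz0, one_smul, Matrix.mul_smul, hmulS, smul_smul,
      inv_mul_cancel₀ hz0, one_smul, sub_sub_cancel]
  have hwu : w * (z • (1 : Matrix (Fin n) (Fin n) ℂ) - a) = 1 := by
    rw [hw, Matrix.mul_sub, Matrix.mul_smul, Matrix.mul_one, Matrix.smul_mul, hSmul,
      smul_smul, smul_smul, mul_inv_cancel₀ hz0, inv_mul_cancel₀ hz0, one_smul, one_smul,
      sub_sub_cancel]
  have hinv : Ring.inverse (z • (1 : Matrix (Fin n) (Fin n) ℂ) - a) = w := by
    have hu : (⟨_, w, huw, hwu⟩ : (Matrix (Fin n) (Fin n) ℂ)ˣ).val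
        = z • (1 : Matrix (Fin n) (Fin n) ℂ) - a := rfl
    rw [← hu, Ring.inverse_unit]
    rfl
  rw [hinv]
  refine ⟨hunit, ?_⟩
  have := hS.const_smul z⁻¹
  rw [hw]
  convert this using 2 with k
  rw [hg, smul_smul, ← pow_succ']

/-- entry evaluation as a continuous linear map -/
noncomputable def entryCLM (i j : Fin n) : Matrix (Fin n) (Fin n) ℂ →L[ℂ] ℂ :=
  LinearMap.mkContinuous
    { toFun := fun M => M i j, map_add' := fun _ _ => rfl, map_smul' := fun _ _ => rfl } 1
    (fun M => by
      have := entry_nnnorm_le M i j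
      rw [← NNReal.coe_le_coe] at this
      rw [one_mul]; exact this)

@[simp] lemma entryCLM_apply (i j : Fin n) (M : Matrix (Fin n) (Fin n) ℂ) :
    entryCLM i j M = M i j := rfl

lemma cx_inv {M : Matrix (Fin n) (Fin n) ℝ} (h : IsUnit M) : cx (M⁻¹) = (cx M)⁻¹ := by
  refine (Matrix.inv_eq_right_inv ?_).symm
  rw [← cx_mul, Matrix.mul_nonsing_inv _ ((Matrix.isUnit_iff_isUnit_det M).1 h), cx_one]

lemma isUnit_cx_iff {M : Matrix (Fin n) (Fin n) ℝ} : IsUnit (cx M) ↔ IsUnit M := by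
  rw [Matrix.isUnit_iff_isUnit_det, Matrix.isUnit_iff_isUnit_det, isUnit_iff_ne_zero,
    isUnit_iff_ne_zero]
  have hdet : (cx M).det = ((M.det : ℝ) : ℂ) :=
    (RingHom.map_det Complex.ofRealHom M).symm
  rw [hdet]
  exact not_congr (by exact_mod_cast Iff.rfl)

lemma nnnorm_coe_real (z : ℝ) : ‖(z : ℂ)‖₊ = ‖z‖₊ := by
  ext; simp [Complex.norm_real]

lemma sr_lt_nnnorm_coe {P : Matrix (Fin n) (Fin n) ℝ} {r : ℝ} (hr0 : 0 < r) (hr : rho P < r)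
    [Nonempty (Fin n)] : spectralRadius ℂ (cx P) < (‖((r : ℂ))‖₊ : ℝ≥0∞) := by
  rw [nnnorm_coe_real, ← enorm_eq_nnnorm, Real.enorm_eq_ofReal hr0.le]
  exact sr_lt_iff.2 hr

section NE2
variable [Nonempty (Fin n)]

lemma real_resolvent (P : Matrix (Fin n) (Fin n) ℝ) {r : ℝ} (hr0 : 0 < r) (hr : rho P < r) :
    IsUnit (r • (1 : Matrix (Fin n) (Fin n) ℝ) - P) ∧
    ∀ i j, HasSum (fun k => r⁻¹ ^ (k + 1) * (P ^ k) i j)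
      (((r • (1 : Matrix (Fin n) (Fin n) ℝ) - P)⁻¹) i j) := by
  obtain ⟨hu, hsum⟩ := hasSum_resolvent (cx P) (sr_lt_nnnorm_coe hr0 hr)
  have cxid : cx (r • (1 : Matrix (Fin n) (Fin n) ℝ) - P)
      = (r : ℂ) • (1 : Matrix (Fin n) (Fin n) ℂ) - cx P := by
    rw [cx_sub, cx_smul, cx_one]
  have hreal : IsUnit (r • (1 : Matrix (Fin n) (Fin n) ℝ) - P) := by
    rw [← isUnit_cx_iff, cxid]; exact hu
  refine ⟨hreal, fun i j => ?_⟩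
  have hinv_cx : Ring.inverse ((r : ℂ) • (1 : Matrix (Fin n) (Fin n) ℂ) - cx P)
      = cx ((r • (1 : Matrix (Fin n) (Fin n) ℝ) - P)⁻¹) := by
    rw [cx_inv hreal, cxid, Matrix.nonsing_inv_eq_ringInverse]
  rw [hinv_cx] at hsum
  have h2 := ((entryCLM i j).hasSum hsum).mapL Complex.reCLM
  have hterm : ∀ k, Complex.reCLM ((entryCLM i j) (((r:ℂ))⁻¹ ^ (k + 1) • cx P ^ k))
      = r⁻¹ ^ (k + 1) * (P ^ k) i j := by
    intro k
    rw [Complex.reCLM_apply, entryCLM_apply, Matrix.smul_apply, ← cx_pow, cx_apply,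
      smul_eq_mul, ← Complex.ofReal_inv, ← Complex.ofReal_pow, ← Complex.ofReal_mul,
      Complex.ofReal_re]
  have hlast : Complex.reCLM ((entryCLM i j) (cx ((r • (1 : Matrix (Fin n) (Fin n) ℝ) - P)⁻¹)))
      = ((r • (1 : Matrix (Fin n) (Fin n) ℝ) - P)⁻¹) i j := by
    rw [Complex.reCLM_apply, entryCLM_apply, cx_apply, Complex.ofReal_re]
  simp only [hterm, hlast] at h2
  exact h2

lemma real_resolvent_nonneg (P : Matrix (Fin n) (Fin n) ℝ) (hP : EntryNN P) {r : ℝ}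
    (hr0 : 0 < r) (hr : rho P < r) :
    EntryNN ((r • (1 : Matrix (Fin n) (Fin n) ℝ) - P)⁻¹) := fun i j =>
  ((real_resolvent P hr0 hr).2 i j).nonneg fun k =>
    mul_nonneg (by positivity) (hP.pow k i j)

lemma real_resolvent_mono (P : Matrix (Fin n) (Fin n) ℝ) (hP : EntryNN P) {r r' : ℝ}
    (hr0 : 0 < r) (hr : rho P < r) (hrr' : r ≤ r') :
    EntryLE ((r' • (1 : Matrix (Fin n) (Fin n) ℝ) - P)⁻¹)
      ((r • (1 : Matrix (Fin n) (Fin n) ℝ) - P)⁻¹) := by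
  intro i j
  refine hasSum_le (fun k => ?_) ((real_resolvent P (lt_of_lt_of_le hr0 hrr') 
    (lt_of_lt_of_le hr hrr')).2 i j) ((real_resolvent P hr0 hr).2 i j)
  exact mul_le_mul_of_nonneg_right
    (pow_le_pow_left₀ (inv_nonneg.2 (hr0.trans_le hrr').le) (inv_anti₀ hr0 hrr') _)
    (hP.pow k i j)

lemma dom_resolvent (P : Matrix (Fin n) (Fin n) ℝ) (hP : EntryNN P) {z : ℂ} {r : ℝ}
    (hzr : ‖z‖ = r) (hr0 : 0 < r) (hr : rho P < r) :
    ‖Ring.inverse (z • (1 : Matrix (Fin n) (Fin n) ℂ) - cx P)‖₊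
      ≤ ‖cx ((r • (1 : Matrix (Fin n) (Fin n) ℝ) - P)⁻¹)‖₊ := by
  have hz : spectralRadius ℂ (cx P) < (‖z‖₊ : ℝ≥0∞) := by
    rw [show ‖z‖₊ = ‖((r:ℂ))‖₊ by ext; simp [hzr, abs_of_nonneg hr0.le]]
    exact sr_lt_nnnorm_coe hr0 hr
  obtain ⟨hu, hsum⟩ := hasSum_resolvent (cx P) hz
  refine nnnorm_cx_le_of_dom fun i j => ?_
  have hentry := (entryCLM i j).hasSum hsum
  have hrealsum := (real_resolvent P hr0 hr).2 i j
  have hnorm : ∀ k, ‖(entryCLM i j) ((z⁻¹) ^ (k + 1) • cx P ^ k)‖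
      = r⁻¹ ^ (k + 1) * (P ^ k) i j := by
    intro k
    rw [entryCLM_apply, Matrix.smul_apply, ← cx_pow, cx_apply, smul_eq_mul, norm_mul,
      norm_pow, norm_inv, show ‖z‖ = r from hzr,
      Complex.norm_real, Real.norm_eq_abs, abs_of_nonneg (hP.pow k i j)]
  calc ‖(entryCLM i j) (Ring.inverse (z • (1 : Matrix (Fin n) (Fin n) ℂ) - cx P))‖
      ≤ ∑' k, ‖(entryCLM i j) ((z⁻¹) ^ (k + 1) • cx P ^ k)‖ := by
        rw [← hentry.tsum_eq]
        exact norm_tsum_le_tsum_norm (by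
          refine Summable.congr hrealsum.summable fun k => (hnorm k).symm)
    _ = ((r • (1 : Matrix (Fin n) (Fin n) ℝ) - P)⁻¹) i j := by
        rw [show (fun k => ‖(entryCLM i j) ((z⁻¹) ^ (k + 1) • cx P ^ k)‖)
          = fun k => r⁻¹ ^ (k + 1) * (P ^ k) i j from funext hnorm]
        exact hrealsum.tsum_eq

lemma sr_lt_of_abs (P : Matrix (Fin n) (Fin n) ℝ) {z : ℂ} {r : ℝ} (habs : ‖z‖ = r)
    (hr0 : 0 < r) (hr : rho P < r) : spectralRadius ℂ (cx P) < (‖z‖₊ : ℝ≥0∞) := by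
  rw [show ‖z‖₊ = ‖((r : ℂ))‖₊ by ext; simp [habs, abs_of_nonneg hr0.le]]
  exact sr_lt_nnnorm_coe hr0 hr

lemma cx_real_resolvent (P : Matrix (Fin n) (Fin n) ℝ) {r : ℝ} (hr0 : 0 < r) (hr : rho P < r) :
    cx ((r • (1 : Matrix (Fin n) (Fin n) ℝ) - P)⁻¹)
      = Ring.inverse ((r : ℂ) • (1 : Matrix (Fin n) (Fin n) ℂ) - cx P) := by
  have cxid : cx (r • (1 : Matrix (Fin n) (Fin n) ℝ) - P)
      = (r : ℂ) • (1 : Matrix (Fin n) (Fin n) ℂ) - cx P := by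
    rw [cx_sub, cx_smul, cx_one]
  have hreal := (real_resolvent P hr0 hr).1
  rw [cx_inv hreal, cxid, Matrix.nonsing_inv_eq_ringInverse]

lemma isUnit_of_near {a : Matrix (Fin n) (Fin n) ℂ} {w lam : ℂ}
    (hw : IsUnit (w • (1 : Matrix (Fin n) (Fin n) ℂ) - a))
    (h : ‖lam - w‖ * ‖Ring.inverse (w • (1 : Matrix (Fin n) (Fin n) ℂ) - a)‖ < 1) :
    IsUnit (lam • (1 : Matrix (Fin n) (Fin n) ℂ) - a) := by
  have h' : ‖(w - lam) • Ring.inverse (w • (1 : Matrix (Fin n) (Fin n) ℂ) - a)‖ < 1 := by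
    rw [norm_smul, norm_sub_rev]
    exact h
  have hfact : lam • (1 : Matrix (Fin n) (Fin n) ℂ) - a
      = (w • (1 : Matrix (Fin n) (Fin n) ℂ) - a)
        * (1 - (w - lam) • Ring.inverse (w • (1 : Matrix (Fin n) (Fin n) ℂ) - a)) := by
    rw [Matrix.mul_sub, Matrix.mul_one, Matrix.mul_smul, Ring.mul_inverse_cancel _ hw,
      sub_smul]
    abel
  rw [hfact]
  exact hw.mul (Units.oneSub _ h').isUnit

lemma bounded_resolvent_contra (P : Matrix (Fin n) (Fin n) ℝ) (hP : EntryNN P)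
    {K δ : ℝ} (hδ : 0 < δ) (hK : 0 ≤ K)
    (hbd : ∀ r : ℝ, rho P < r → r ≤ rho P + δ →
      ‖cx ((r • (1 : Matrix (Fin n) (Fin n) ℝ) - P)⁻¹)‖ ≤ K) : False := by
  obtain ⟨lam, hlam, hlamnorm⟩ := spectrum.exists_nnnorm_eq_spectralRadius (cx P)
  have hlamabs : ‖lam‖ = rho P := by
    have h1 := congrArg ENNReal.toReal hlamnorm
    rw [ENNReal.coe_toReal] at h1
    simpa [rho, sr] using h1
  set ρ := rho P with hρ
  have hρ0 : 0 ≤ ρ := rho_nonneg P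
  set ζ : ℂ := if ρ = 0 then 1 else lam / (ρ : ℂ) with hζ
  have habsζ : ‖ζ‖ = 1 := by
    rw [hζ]
    split_ifs with h0
    · simp
    · rw [norm_div, hlamabs, Complex.norm_real, Real.norm_eq_abs, abs_of_nonneg hρ0, div_self h0]
  have hlamζ : lam = (ρ : ℂ) * ζ := by
    rw [hζ]
    split_ifs with h0
    · have h1 : ‖lam‖ = 0 := by rw [hlamabs, h0]
      rw [norm_eq_zero] at h1
      simp [h1, h0]
    · rw [mul_div_cancel₀ _ (by exact_mod_cast h0)]
  set ε := min δ (1 / (2 * (K + 1))) with hε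
  have hε0 : 0 < ε := lt_min hδ (by positivity)
  have hεδ : ε ≤ δ := min_le_left _ _
  have hεK : ε * K < 1 := by
    have h1 : ε ≤ 1 / (2 * (K + 1)) := min_le_right _ _
    have h2 : ε * K ≤ (1 / (2 * (K + 1))) * K :=
      mul_le_mul_of_nonneg_right h1 hK
    have h3 : (1 / (2 * (K + 1))) * K < 1 := by
      rw [div_mul_eq_mul_div, div_lt_one (by positivity)]
      nlinarith
    linarith
  set r := ρ + ε with hrdef
  have hrρ : ρ < r := by rw [hrdef]; linarith
  have hr0 : 0 < r := lt_of_le_of_lt hρ0 hrρ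
  set z := (r : ℂ) * ζ with hz
  have habz : ‖z‖ = r := by
    rw [hz, norm_mul, habsζ, Complex.norm_real, Real.norm_eq_abs, abs_of_nonneg hr0.le, mul_one]
  have hsrz := sr_lt_of_abs P habz hr0 hrρ
  have hu := (hasSum_resolvent (cx P) hsrz).1
  have hRle : ‖Ring.inverse (z • (1 : Matrix (Fin n) (Fin n) ℂ) - cx P)‖ ≤ K := by
    have h1 := dom_resolvent P hP habz hr0 hrρ
    have h2 : ‖Ring.inverse (z • (1 : Matrix (Fin n) (Fin n) ℂ) - cx P)‖
        ≤ ‖cx ((r • (1 : Matrix (Fin n) (Fin n) ℝ) - P)⁻¹)‖ := by exact_mod_cast h1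
    exact h2.trans (hbd r hrρ (by rw [hrdef]; linarith))
  have hlz : ‖lam - z‖ = ε := by
    have h1 : lam - z = ((ρ - r : ℝ) : ℂ) * ζ := by
      rw [hlamζ, hz]; push_cast; ring
    rw [h1, norm_mul, habsζ, mul_one,
      Complex.norm_real, Real.norm_eq_abs, abs_of_nonpos (by linarith), hrdef]
    ring
  have happ : ‖lam - z‖ * ‖Ring.inverse (z • (1 : Matrix (Fin n) (Fin n) ℂ) - cx P)‖ < 1 := by
    rw [hlz]
    calc ε * ‖Ring.inverse (z • (1 : Matrix (Fin n) (Fin n) ℂ) - cx P)‖ ≤ ε * K :=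
          mul_le_mul_of_nonneg_left hRle hε0.le
    _ < 1 := hεK
  have hcontr := isUnit_of_near hu happ
  rw [spectrum.mem_iff] at hlam
  exact hlam (by rwa [Algebra.algebraMap_eq_smul_one])

lemma rho_mem_spectrum (P : Matrix (Fin n) (Fin n) ℝ) (hP : EntryNN P) :
    ((rho P : ℝ) : ℂ) ∈ spectrum ℂ (cx P) := by
  by_contra hmem
  have hunit : IsUnit ((rho P : ℂ) • (1 : Matrix (Fin n) (Fin n) ℂ) - cx P) := by
    have h := spectrum.notMem_iff.1 hmem
    rwa [Algebra.algebraMap_eq_smul_one] at h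
  have hf : Continuous fun t : ℝ => (t : ℂ) • (1 : Matrix (Fin n) (Fin n) ℂ) - cx P :=
    ((Complex.continuous_ofReal).smul continuous_const).sub continuous_const
  have hcont : ContinuousAt
      (fun t : ℝ => Ring.inverse ((t : ℂ) • (1 : Matrix (Fin n) (Fin n) ℂ) - cx P)) (rho P) := by
    have h1 := NormedRing.inverse_continuousAt hunit.unit
    have h2 : (hunit.unit : Matrix (Fin n) (Fin n) ℂ)
        = (rho P : ℂ) • (1 : Matrix (Fin n) (Fin n) ℂ) - cx P := hunit.unit_spec
    rw [ContinuousAt, h2] at h1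
    exact h1.comp hf.continuousAt
  set L := ‖Ring.inverse ((rho P : ℂ) • (1 : Matrix (Fin n) (Fin n) ℂ) - cx P)‖ with hL
  have hev : ∀ᶠ t : ℝ in 𝓝 (rho P),
      ‖Ring.inverse ((t : ℂ) • (1 : Matrix (Fin n) (Fin n) ℂ) - cx P)‖ < L + 1 :=
    hcont.norm.eventually_lt_const (lt_add_one L)
  rw [Metric.eventually_nhds_iff] at hev
  obtain ⟨δ₀, hδ₀, hball⟩ := hev
  refine bounded_resolvent_contra P hP (half_pos hδ₀) (by positivity : (0:ℝ) ≤ L + 1)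
    fun r hr1 hr2 => ?_
  have hr0 : 0 < r := lt_of_le_of_lt (rho_nonneg P) hr1
  rw [cx_real_resolvent P hr0 hr1]
  have hdist : dist r (rho P) < δ₀ := by
    rw [Real.dist_eq, abs_of_nonneg (by linarith)]
    linarith
  exact (hball hdist).le

lemma abs_le_rho {M : Matrix (Fin n) (Fin n) ℝ} {μ : ℂ} (h : μ ∈ spectrum ℂ (cx M)) :
    ‖μ‖ ≤ rho M := by
  have h1 : (‖μ‖₊ : ℝ≥0∞) ≤ sr M :=
    le_iSup₂ (f := fun k (_ : k ∈ spectrum ℂ (cx M)) => (‖k‖₊ : ℝ≥0∞)) μ h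
  have h2 := ENNReal.toReal_mono (sr_ne_top M) h1
  simpa [rho] using h2

lemma resolvent_le_inv (B : Matrix (Fin n) (Fin n) ℝ) (hB : EntryNN B) {s r : ℝ}
    (hs : 0 < s) (hV : IsUnit (s • (1 : Matrix (Fin n) (Fin n) ℝ) - B))
    (hVinv : EntryNN ((s • (1 : Matrix (Fin n) (Fin n) ℝ) - B)⁻¹))
    (hsr : s ≤ r) (hr : rho B < r) :
    EntryLE ((r • (1 : Matrix (Fin n) (Fin n) ℝ) - B)⁻¹)
      ((s • (1 : Matrix (Fin n) (Fin n) ℝ) - B)⁻¹) := by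
  have hr0 : 0 < r := lt_of_lt_of_le hs hsr
  have hA := (real_resolvent B hr0 hr).1
  have hdV := (Matrix.isUnit_iff_isUnit_det _).1 hV
  have hdA := (Matrix.isUnit_iff_isUnit_det _).1 hA
  have h1 : (r • (1 : Matrix (Fin n) (Fin n) ℝ) - B)
      * (s • (1 : Matrix (Fin n) (Fin n) ℝ) - B)⁻¹
      = 1 + (r - s) • (s • (1 : Matrix (Fin n) (Fin n) ℝ) - B)⁻¹ := by
    have hsplit : (r • (1 : Matrix (Fin n) (Fin n) ℝ) - B)
        = (s • (1 : Matrix (Fin n) (Fin n) ℝ) - B)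
          + (r - s) • (1 : Matrix (Fin n) (Fin n) ℝ) := by
      rw [sub_smul]; abel
    rw [hsplit, Matrix.add_mul, Matrix.mul_nonsing_inv _ hdV, Matrix.smul_mul, Matrix.one_mul]
  have h2 := congrArg
    (fun X => (r • (1 : Matrix (Fin n) (Fin n) ℝ) - B)⁻¹ * X) h1
  rw [← Matrix.mul_assoc, Matrix.nonsing_inv_mul _ hdA, Matrix.one_mul, Matrix.mul_add,
    Matrix.mul_one, Matrix.mul_smul] at h2
  intro i j
  have h3 := congrArg (fun X => X i j) h2
  simp only [Matrix.add_apply, Matrix.smul_apply, smul_eq_mul] at h3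
  have h4 : 0 ≤ (r - s) * (((r • (1 : Matrix (Fin n) (Fin n) ℝ) - B)⁻¹
      * (s • (1 : Matrix (Fin n) (Fin n) ℝ) - B)⁻¹) i j) :=
    mul_nonneg (by linarith) (((real_resolvent_nonneg B hB hr0 hr).mul hVinv) i j)
  linarith [h3]

lemma norm_cx_mono {A B : Matrix (Fin n) (Fin n) ℝ} (hA : EntryNN A) (hAB : EntryLE A B) :
    ‖cx A‖ ≤ ‖cx B‖ := by
  have := nnnorm_cx_le_of_dom (A := cx A) (B := B) fun i j => by
    rw [cx_apply, Complex.norm_real, Real.norm_eq_abs, abs_of_nonneg (hA i j)]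
    exact hAB i j
  exact_mod_cast this

lemma rho_lt_of_inv_nonneg (B : Matrix (Fin n) (Fin n) ℝ) (hB : EntryNN B) {s : ℝ}
    (hs : 0 < s) (hV : IsUnit (s • (1 : Matrix (Fin n) (Fin n) ℝ) - B))
    (hVinv : EntryNN ((s • (1 : Matrix (Fin n) (Fin n) ℝ) - B)⁻¹)) : rho B < s := by
  by_contra hcon
  push_neg at hcon
  refine bounded_resolvent_contra B hB one_pos
    (norm_nonneg (cx ((s • (1 : Matrix (Fin n) (Fin n) ℝ) - B)⁻¹))) fun r hr1 hr2 => ?_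
  have hsr : s ≤ r := le_trans hcon hr1.le
  exact norm_cx_mono (real_resolvent_nonneg B hB (lt_of_lt_of_le hs hsr) hr1)
    (resolvent_le_inv B hB hs hV hVinv hsr hr1)

lemma rho_le_rho {A B : Matrix (Fin n) (Fin n) ℝ} (hA : EntryNN A) (hAB : EntryLE A B) :
    rho A ≤ rho B := ENNReal.toReal_mono (sr_ne_top B) (sr_mono hA hAB)

lemma shift_mem_iff {A : Matrix (Fin n) (Fin n) ℝ} {s : ℝ} {μ : ℂ} :
    μ ∈ spectrum ℂ (cx (A - s • 1)) ↔ μ + (s : ℂ) ∈ spectrum ℂ (cx A) := by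
  have heq : (algebraMap ℂ (Matrix (Fin n) (Fin n) ℂ)) μ - cx (A - s • 1)
      = (algebraMap ℂ (Matrix (Fin n) (Fin n) ℂ)) (μ + (s : ℂ)) - cx A := by
    rw [cx_sub, cx_smul, cx_one, Algebra.algebraMap_eq_smul_one, Algebra.algebraMap_eq_smul_one,
      add_smul]
    abel
  rw [spectrum.mem_iff, spectrum.mem_iff, heq]

lemma EntryLE.refl (A : Matrix (Fin n) (Fin n) ℝ) : EntryLE A A := fun _ _ => le_refl _

lemma isUnit_smul_unit {t : ℝ} (ht : t ≠ 0) {X : Matrix (Fin n) (Fin n) ℝ} (hX : IsUnit X) :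
    IsUnit (t • X) := by
  have h1 : (t • (1 : Matrix (Fin n) (Fin n) ℝ)) * (t⁻¹ • (1 : Matrix (Fin n) (Fin n) ℝ)) = 1 := by
    rw [Matrix.smul_mul, Matrix.mul_smul, smul_smul, mul_inv_cancel₀ ht, one_smul, Matrix.one_mul]
  have h2 : (t⁻¹ • (1 : Matrix (Fin n) (Fin n) ℝ)) * (t • (1 : Matrix (Fin n) (Fin n) ℝ)) = 1 := by
    rw [Matrix.smul_mul, Matrix.mul_smul, smul_smul, inv_mul_cancel₀ ht, one_smul, Matrix.one_mul]
  have hu : IsUnit (t • (1 : Matrix (Fin n) (Fin n) ℝ)) := ⟨⟨_, _, h1, h2⟩, rfl⟩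
  have : t • X = (t • (1 : Matrix (Fin n) (Fin n) ℝ)) * X := by
    rw [Matrix.smul_mul, Matrix.one_mul]
  rw [this]
  exact hu.mul hX

lemma isUnit_inv_of_isUnit {X : Matrix (Fin n) (Fin n) ℝ} (hX : IsUnit X) : IsUnit X⁻¹ := by
  have hd := (Matrix.isUnit_iff_isUnit_det X).1 hX
  exact ⟨⟨X⁻¹, X, Matrix.nonsing_inv_mul X hd, Matrix.mul_nonsing_inv X hd⟩, rfl⟩

end NE2

end NE

end NGMaux

attribute [local instance] Matrix.linftyOpNormedAddCommGroup Matrix.linftyOpNormedRing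
  Matrix.linftyOpNormedAlgebra

local instance {n : ℕ} : CompleteSpace (Matrix (Fin n) (Fin n) ℂ) :=
  inferInstance

set_option maxHeartbeats 1000000 in
open NGMaux in
/-- The linear-algebra core of the weak R₀ alternative via the next-generation-matrix
method: for F entrywise nonnegative and V a nonsingular M-matrix (nonpositive
off-diagonal entries, entrywise nonnegative inverse), all complex eigenvalues of
F − V have negative real part iff all complex eigenvalues of F·V⁻¹ have modulus < 1. -/
theorem stmt3 {n : ℕ} (F V : Matrix (Fin n) (Fin n) ℝ)
    (hF : ∀ i j, 0 ≤ F i j) (hV : IsUnit V)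
    (hVoff : ∀ i j, i ≠ j → V i j ≤ 0)
    (hVinv : ∀ i j, 0 ≤ V⁻¹ i j) :
    (∀ μ ∈ spectrum ℂ ((F - V).map Complex.ofReal), μ.re < 0) ↔
    (∀ μ ∈ spectrum ℂ ((F * V⁻¹).map Complex.ofReal), ‖μ‖ < 1) := by
  rcases Nat.eq_zero_or_pos n with hn | hn
  · subst hn
    haveI : Subsingleton (Matrix (Fin 0) (Fin 0) ℂ) :=
      ⟨fun a b => Matrix.ext fun i => i.elim0⟩
    constructor <;> intro _ μ hμ <;> exfalso <;>
      exact (spectrum.mem_iff.1 hμ) (isUnit_of_subsingleton _)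
  haveI : Nonempty (Fin n) := Fin.pos_iff_nonempty.1 hn
  set s : ℝ := 1 + ∑ i, |V i i| with hs_def
  have hsum0 : (0:ℝ) ≤ ∑ i, |V i i| := Finset.sum_nonneg fun i _ => abs_nonneg _
  have hs1 : 1 ≤ s := by rw [hs_def]; linarith
  have hs0 : 0 < s := by linarith
  have hsV : ∀ i, V i i + 1 ≤ s := by
    intro i
    have h1 : |V i i| ≤ ∑ j, |V j j| :=
      Finset.single_le_sum (f := fun j => |V j j|) (fun j _ => abs_nonneg _) (Finset.mem_univ i)
    have h2 := le_abs_self (V i i)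
    rw [hs_def]; linarith
  set B := s • (1 : Matrix (Fin n) (Fin n) ℝ) - V with hB_def
  have hBnn : EntryNN B := by
    intro i j
    rcases eq_or_ne i j with rfl | hij
    · simp only [hB_def, Matrix.sub_apply, Matrix.smul_apply, Matrix.one_apply_eq,
        smul_eq_mul, mul_one]
      linarith [hsV i]
    · simp only [hB_def, Matrix.sub_apply, Matrix.smul_apply, Matrix.one_apply_ne hij,
        smul_eq_mul, mul_zero, zero_sub]
      linarith [hVoff i j hij]
  have hVeq : s • (1 : Matrix (Fin n) (Fin n) ℝ) - B = V := by
    rw [hB_def, sub_sub_cancel]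
  have hrhoB : rho B < s := by
    refine rho_lt_of_inv_nonneg B hBnn hs0 ?_ ?_
    · rw [hVeq]; exact hV
    · rw [hVeq]; exact hVinv
  set C := F + B with hC_def
  have hCnn : EntryNN C := fun i j => add_nonneg (hF i j) (hBnn i j)
  have hFmV : F - V = C - s • (1 : Matrix (Fin n) (Fin n) ℝ) := by
    rw [hC_def, hB_def]; abel
  have hTnn : EntryNN (F * V⁻¹) := EntryNN.mul hF hVinv
  have hVdet := (Matrix.isUnit_iff_isUnit_det V).1 hV
  constructor
  · intro hL μ hμ
    have hmemC := rho_mem_spectrum C hCnn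
    have hshift : ((rho C : ℂ) - (s:ℂ)) ∈ spectrum ℂ (cx (F - V)) := by
      rw [hFmV]
      refine shift_mem_iff.2 ?_
      rw [show ((rho C : ℂ) - (s:ℂ)) + (s:ℂ) = (rho C : ℂ) by ring]
      exact hmemC
    have hre := hL _ hshift
    have hrhoC : rho C < s := by
      rw [show ((rho C : ℂ) - (s:ℂ)) = ((rho C - s : ℝ) : ℂ) by push_cast; ring,
        Complex.ofReal_re] at hre
      linarith
    have hrhoT : rho (F * V⁻¹) < 1 := by
      by_contra hcon
      push_neg at hcon
      set t := rho (F * V⁻¹) with ht_def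
      have hti : 0 < t := lt_of_lt_of_le one_pos hcon
      have ht1 : t⁻¹ ≤ 1 := by simpa using inv_anti₀ one_pos hcon
      have hmemT := rho_mem_spectrum (F * V⁻¹) hTnn
      set D := B + t⁻¹ • F with hD_def
      have hDnn : EntryNN D := fun i j => by
        simp only [hD_def, Matrix.add_apply, Matrix.smul_apply, smul_eq_mul]
        exact add_nonneg (hBnn i j) (mul_nonneg (inv_nonneg.2 hti.le) (hF i j))
      have hDC : EntryLE D C := fun i j => by
        simp only [hD_def, hC_def, Matrix.add_apply, Matrix.smul_apply, smul_eq_mul]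
        have h1 : t⁻¹ * F i j ≤ 1 * F i j := mul_le_mul_of_nonneg_right ht1 (hF i j)
        linarith
      have hrhoD : rho D < s := lt_of_le_of_lt (rho_le_rho hDnn hDC) hrhoC
      have hUsD : IsUnit (s • (1 : Matrix (Fin n) (Fin n) ℝ) - D) :=
        (real_resolvent D hs0 hrhoD).1
      have hkey : t • (s • (1 : Matrix (Fin n) (Fin n) ℝ) - D) = t • V - F := by
        have hsplit : s • (1 : Matrix (Fin n) (Fin n) ℝ) - (B + t⁻¹ • F)
            = (s • (1 : Matrix (Fin n) (Fin n) ℝ) - B) - t⁻¹ • F := by abel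
        rw [hD_def, ← hVeq, hsplit, smul_sub, smul_smul, mul_inv_cancel₀ (ne_of_gt hti), one_smul]
      have hUtVF : IsUnit (t • V - F) := by
        rw [← hkey]; exact isUnit_smul_unit (ne_of_gt hti) hUsD
      have hfact : t • (1 : Matrix (Fin n) (Fin n) ℝ) - F * V⁻¹ = (t • V - F) * V⁻¹ := by
        rw [Matrix.sub_mul, Matrix.smul_mul, Matrix.mul_nonsing_inv _ hVdet]
      have hUnitT : IsUnit (t • (1 : Matrix (Fin n) (Fin n) ℝ) - F * V⁻¹) := by
        rw [hfact]; exact hUtVF.mul (isUnit_inv_of_isUnit hV)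
      rw [spectrum.mem_iff] at hmemT
      apply hmemT
      rw [Algebra.algebraMap_eq_smul_one,
        show ((t:ℝ) : ℂ) • (1 : Matrix (Fin n) (Fin n) ℂ) - cx (F * V⁻¹)
            = cx (t • (1 : Matrix (Fin n) (Fin n) ℝ) - F * V⁻¹) by
          rw [cx_sub, cx_smul, cx_one]]
      exact isUnit_cx_iff.2 hUnitT
    exact lt_of_le_of_lt (abs_le_rho hμ) hrhoT
  · intro hR μ hμ
    have hrhoT : rho (F * V⁻¹) < 1 := by
      have h1 : spectralRadius ℂ (cx (F * V⁻¹)) < ((1 : ℝ≥0) : ℝ≥0∞) := by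
        refine spectrum.spectralRadius_lt_of_forall_lt _ fun z hz => ?_
        have h2 := hR z hz
        rw [← NNReal.coe_lt_coe]
        simpa [coe_nnnorm] using h2
      have h3 : sr (F * V⁻¹) < ENNReal.ofReal 1 := by
        rw [ENNReal.ofReal_one]
        simpa [sr] using h1
      exact sr_lt_iff.1 h3
    have hrhoC : rho C < s := by
      by_contra hcon
      push_neg at hcon
      set r := rho C with hr_def
      have hr0 : 0 < r := lt_of_lt_of_le hs0 hcon
      have hrB : rho B < r := lt_of_lt_of_le hrhoB hcon
      have hWu : IsUnit (r • (1 : Matrix (Fin n) (Fin n) ℝ) - B) :=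
        (real_resolvent B hr0 hrB).1
      have hWdet := (Matrix.isUnit_iff_isUnit_det _).1 hWu
      have hWnn : EntryNN ((r • (1 : Matrix (Fin n) (Fin n) ℝ) - B)⁻¹) :=
        real_resolvent_nonneg B hBnn hr0 hrB
      have hWle : EntryLE ((r • (1 : Matrix (Fin n) (Fin n) ℝ) - B)⁻¹)
          ((s • (1 : Matrix (Fin n) (Fin n) ℝ) - B)⁻¹) :=
        resolvent_le_inv B hBnn hs0 (by rw [hVeq]; exact hV) (by rw [hVeq]; exact hVinv)
          hcon hrB
      rw [hVeq] at hWle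
      set T2 := F * (r • (1 : Matrix (Fin n) (Fin n) ℝ) - B)⁻¹ with hT2_def
      have hT2nn : EntryNN T2 := EntryNN.mul hF hWnn
      have hT2le : EntryLE T2 (F * V⁻¹) :=
        EntryLE.mul hF hWnn (EntryLE.refl F) hWle
      have hrhoT2 : rho T2 < 1 := lt_of_le_of_lt (rho_le_rho hT2nn hT2le) hrhoT
      have hU1 : IsUnit ((1:ℝ) • (1 : Matrix (Fin n) (Fin n) ℝ) - T2) :=
        (real_resolvent T2 one_pos hrhoT2).1
      rw [one_smul] at hU1
      have hfact2 : (1 - T2) * (r • (1 : Matrix (Fin n) (Fin n) ℝ) - B)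
          = r • (1 : Matrix (Fin n) (Fin n) ℝ) - C := by
        rw [hT2_def, Matrix.sub_mul, Matrix.one_mul, Matrix.mul_assoc,
          Matrix.nonsing_inv_mul _ hWdet, Matrix.mul_one, hC_def]
        abel
      have hUC : IsUnit (r • (1 : Matrix (Fin n) (Fin n) ℝ) - C) := by
        rw [← hfact2]; exact hU1.mul hWu
      have hmemC := rho_mem_spectrum C hCnn
      rw [spectrum.mem_iff] at hmemC
      apply hmemC
      rw [Algebra.algebraMap_eq_smul_one,
        show ((r:ℝ) : ℂ) • (1 : Matrix (Fin n) (Fin n) ℂ) - cx C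
            = cx (r • (1 : Matrix (Fin n) (Fin n) ℝ) - C) by
          rw [cx_sub, cx_smul, cx_one]]
      exact isUnit_cx_iff.2 hUC
    have hμ2 : μ ∈ spectrum ℂ (cx (F - V)) := hμ
    rw [hFmV] at hμ2
    have hμ' := shift_mem_iff.1 hμ2
    have habs := abs_le_rho hμ'
    have h1 : (μ + (s:ℂ)).re ≤ ‖μ + (s:ℂ)‖ := Complex.re_le_norm _
    have h2 : μ.re = (μ + (s:ℂ)).re - s := by simp
    linarith
end

section
/- Let V be an invertible n×n real matrix with V⁻¹ entrywise nonnegative, b ∈ ℝⁿ a column vector with nonnegative entries, α ∈ ℝⁿ a row vector, B = b·α, and 𝓡 = α·V⁻¹·b > 0. Let i : ℝ → ℝⁿ and s : ℝ → ℝ satisfy, for all t: i(t) has nonnegative entries, s(t) ≤ 1/𝓡, and i is differentiable at t with i'(t) = i(t)·(s(t)·B − V). Then Y(t) := i(t)·V⁻¹·b is nonincreasing; indeed Y'(t) = (i(t)·b)·(s(t)·𝓡 − 1) ≤ 0 for every t. -/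
open Matrix

/-- Lyapunov property of Y = i·V⁻¹·b for the FA SIR-PH model: if V⁻¹ and b are
entrywise nonnegative, 𝓡 = α·V⁻¹·b > 0, i(t) is entrywise nonnegative, s(t) ≤ 1/𝓡,
and i' = i·(s·B − V) with B = b·α, then Y is nonincreasing, with
Y' = (i·b)·(s·𝓡 − 1) ≤ 0. -/
theorem stmt8 {n : ℕ} (V : Matrix (Fin n) (Fin n) ℝ) (hV : IsUnit V)
    (hVinv : ∀ i j, 0 ≤ V⁻¹ i j) (b α : Fin n → ℝ) (hb : ∀ k, 0 ≤ b k)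
    (B : Matrix (Fin n) (Fin n) ℝ) (hB : B = Matrix.vecMulVec b α)
    (R : ℝ) (hR : R = α ⬝ᵥ V⁻¹.mulVec b) (hRpos : 0 < R)
    (i : ℝ → Fin n → ℝ) (s : ℝ → ℝ)
    (hipos : ∀ t k, 0 ≤ i t k) (hs : ∀ t, s t ≤ 1 / R)
    (hi : ∀ t, HasDerivAt i (Matrix.vecMul (i t) (s t • B - V)) t) :
    Antitone (fun t => Matrix.vecMul (i t) V⁻¹ ⬝ᵥ b) ∧
    ∀ t, HasDerivAt (fun t => Matrix.vecMul (i t) V⁻¹ ⬝ᵥ b)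
        ((i t ⬝ᵥ b) * (s t * R - 1)) t ∧ (i t ⬝ᵥ b) * (s t * R - 1) ≤ 0 := by
  have hdet : IsUnit V.det := (Matrix.isUnit_iff_isUnit_det V).mp hV
  have hVV : V * V⁻¹ = 1 := Matrix.mul_nonsing_inv V hdet
  -- the bundled linear functional x ↦ vecMul x V⁻¹ ⬝ᵥ b
  let lin : (Fin n → ℝ) →ₗ[ℝ] ℝ :=
    { toFun := fun x => Matrix.vecMul x V⁻¹ ⬝ᵥ b
      map_add' := by intro x y; simp [Matrix.add_vecMul, add_dotProduct]
      map_smul' := by intro c x; simp [Matrix.smul_vecMul, smul_dotProduct] }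
  let L : (Fin n → ℝ) →L[ℝ] ℝ := lin.toContinuousLinearMap
  have hvecB : ∀ x : Fin n → ℝ, Matrix.vecMul x B = (x ⬝ᵥ b) • α := by
    intro x
    subst hB
    ext j
    simp [Matrix.vecMul, Matrix.vecMulVec, dotProduct, Finset.sum_mul, mul_assoc]
  have hsm : ∀ (c : ℝ) (M : Matrix (Fin n) (Fin n) ℝ) (v : Fin n → ℝ),
      Matrix.vecMul v (c • M) = c • Matrix.vecMul v M := by
    intro c M v
    ext j
    simp [Matrix.vecMul, dotProduct, Finset.mul_sum, mul_left_comm]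
  have key : ∀ t, Matrix.vecMul (Matrix.vecMul (i t) (s t • B - V)) V⁻¹ ⬝ᵥ b
      = (i t ⬝ᵥ b) * (s t * R - 1) := by
    intro t
    rw [Matrix.vecMul_vecMul, Matrix.sub_mul, Matrix.smul_mul, hVV,
      Matrix.vecMul_sub, hsm, Matrix.vecMul_one,
      sub_dotProduct, smul_dotProduct, ← Matrix.vecMul_vecMul,
      hvecB, Matrix.smul_vecMul, smul_dotProduct,
      ← Matrix.dotProduct_mulVec, ← hR, smul_eq_mul, smul_eq_mul]
    ring
  have hY : ∀ t, HasDerivAt (fun t => Matrix.vecMul (i t) V⁻¹ ⬝ᵥ b)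
      ((i t ⬝ᵥ b) * (s t * R - 1)) t := by
    intro t
    have h := L.hasFDerivAt.comp_hasDerivAt t (hi t)
    have hL : L (Matrix.vecMul (i t) (s t • B - V)) = (i t ⬝ᵥ b) * (s t * R - 1) := key t
    rw [hL] at h
    exact h
  have hnonpos : ∀ t, (i t ⬝ᵥ b) * (s t * R - 1) ≤ 0 := by
    intro t
    have h1 : 0 ≤ i t ⬝ᵥ b :=
      Finset.sum_nonneg fun k _ => mul_nonneg (hipos t k) (hb k)
    have h2 : s t * R - 1 ≤ 0 := by
      have h := mul_le_mul_of_nonneg_right (hs t) hRpos.le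
      rw [one_div, inv_mul_cancel₀ hRpos.ne'] at h
      linarith
    exact mul_nonpos_of_nonneg_of_nonpos h1 h2
  refine ⟨?_, fun t => ⟨hY t, hnonpos t⟩⟩
  apply antitone_of_deriv_nonpos
  · exact fun t => (hY t).differentiableAt
  · intro t
    rw [(hY t).deriv]
    exact hnonpos t
end

section
/- Let μ > 0 and Λ > 0, let γ⃗_s ∈ ℝᵖ be a row vector with nonnegative entries and γ_s = γ⃗_s·1 its sum, and let g_r, ν_r ∈ ℝᵖ be column vectors with nonnegative entries. Set D = Diag(g_r + ν_r + μ·1), which is invertible. Then μ + γ_s − γ⃗_s·D⁻¹·g_r ≥ μ > 0, and the system of equations { Λ = (μ + γ_s)·s − r·g_r ; s·γ⃗_s = r·D } in the unknowns s ∈ ℝ and the row vector r ∈ ℝᵖ has the unique solution s_dfe = Λ/(μ + γ_s − γ⃗_s·D⁻¹·g_r) and r_dfe = s_dfe·γ⃗_s·D⁻¹. -/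
open Matrix

/-- Disease-free equilibrium of the pedagogical SIRS-FA model with p recovered
classes: D = Diag(g_r + ν_r + μ·1) is invertible, μ + γ_s − γ⃗_s·D⁻¹·g_r ≥ μ > 0,
and the DFE equations have the unique solution
s_dfe = Λ/(μ + γ_s − γ⃗_s·D⁻¹·g_r), r_dfe = s_dfe·γ⃗_s·D⁻¹. -/
theorem stmt9 {p : ℕ} (μ Λ : ℝ) (hμ : 0 < μ) (hΛ : 0 < Λ)
    (γv gr νr : Fin p → ℝ) (hγ : ∀ j, 0 ≤ γv j) (hgr : ∀ j, 0 ≤ gr j)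
    (hνr : ∀ j, 0 ≤ νr j)
    (γs : ℝ) (hγs : γs = ∑ j, γv j)
    (D : Matrix (Fin p) (Fin p) ℝ)
    (hD : D = Matrix.diagonal (fun j => gr j + νr j + μ)) :
    IsUnit D ∧
    0 < μ + γs - γv ⬝ᵥ D⁻¹.mulVec gr ∧
    μ ≤ μ + γs - γv ⬝ᵥ D⁻¹.mulVec gr ∧
    (∀ (s : ℝ) (r : Fin p → ℝ),
      (Λ = (μ + γs) * s - r ⬝ᵥ gr ∧ s • γv = Matrix.vecMul r D) ↔
      (s = Λ / (μ + γs - γv ⬝ᵥ D⁻¹.mulVec gr) ∧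
       r = (Λ / (μ + γs - γv ⬝ᵥ D⁻¹.mulVec gr)) • Matrix.vecMul γv D⁻¹)) := by
  set d : Fin p → ℝ := fun j => gr j + νr j + μ with hd_def
  have hd : ∀ j, 0 < d j := fun j => by have := hgr j; have := hνr j; simp [hd_def]; linarith
  set E : Matrix (Fin p) (Fin p) ℝ := Matrix.diagonal (fun j => (d j)⁻¹) with hE_def
  have hDE : D * E = 1 := by
    rw [hD, hE_def, Matrix.diagonal_mul_diagonal]
    rw [show (fun j => d j * (d j)⁻¹) = fun _ => (1:ℝ) from funext fun j => mul_inv_cancel₀ (hd j).ne'];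
    exact Matrix.diagonal_one
  have hED : E * D = 1 := by
    rw [hD, hE_def, Matrix.diagonal_mul_diagonal]
    rw [show (fun j => (d j)⁻¹ * d j) = fun _ => (1:ℝ) from funext fun j => inv_mul_cancel₀ (hd j).ne'];
    exact Matrix.diagonal_one
  have hunit : IsUnit D := ⟨⟨D, E, hDE, hED⟩, rfl⟩
  have hinv : D⁻¹ = E := Matrix.inv_eq_right_inv hDE
  have hdot : γv ⬝ᵥ D⁻¹.mulVec gr = ∑ j, γv j * ((d j)⁻¹ * gr j) := by
    rw [hinv, hE_def]
    simp [dotProduct, Matrix.mulVec_diagonal]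
  have hle : μ ≤ μ + γs - γv ⬝ᵥ D⁻¹.mulVec gr := by
    rw [hdot, hγs]
    have : ∑ j, γv j * ((d j)⁻¹ * gr j) ≤ ∑ j, γv j := by
      apply Finset.sum_le_sum
      intro j _
      have h1 : (d j)⁻¹ * gr j ≤ 1 := by
        rw [inv_mul_le_iff₀ (hd j), mul_one]
        have := hνr j; simp [hd_def]; linarith
      calc γv j * ((d j)⁻¹ * gr j) ≤ γv j * 1 := mul_le_mul_of_nonneg_left h1 (hγ j)
        _ = γv j := mul_one _
    linarith
  have hc : 0 < μ + γs - γv ⬝ᵥ D⁻¹.mulVec gr := lt_of_lt_of_le hμ hle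
  refine ⟨hunit, hc, hle, ?_⟩
  intro s r
  set c := μ + γs - γv ⬝ᵥ D⁻¹.mulVec gr with hc_def
  have hkey : Matrix.vecMul γv D⁻¹ ⬝ᵥ gr = γv ⬝ᵥ D⁻¹.mulVec gr :=
    (Matrix.dotProduct_mulVec γv D⁻¹ gr).symm
  constructor
  · rintro ⟨h1, h2⟩
    have hr : r = s • Matrix.vecMul γv D⁻¹ := by
      have : Matrix.vecMul (s • γv) D⁻¹ = Matrix.vecMul (Matrix.vecMul r D) D⁻¹ := by rw [h2]
      rw [Matrix.vecMul_vecMul, hinv, hDE, Matrix.vecMul_one, Matrix.smul_vecMul] at this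
      rw [hinv]
      exact this.symm
    have hΛeq : Λ = s * c := by
      rw [h1, hr, hc_def]
      simp [smul_dotProduct, hkey]
      ring
    have hs : s = Λ / c := by
      field_simp [hΛeq]
      linarith [hΛeq]
    exact ⟨hs, by rw [hr, hs]⟩
  · rintro ⟨hs, hr⟩
    constructor
    · rw [hs, hr]
      rw [smul_dotProduct, hkey]
      have hx : γv ⬝ᵥ D⁻¹.mulVec gr = μ + γs - c := by rw [hc_def]; ring
      rw [hx]
      field_simp
      linear_combination (Λ * μ + Λ * γs - Λ * c) * mul_inv_cancel₀ hc.ne'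
    · rw [hr, hs]
      have : Matrix.vecMul ((Λ / c) • Matrix.vecMul γv D⁻¹) D
          = (Λ / c) • Matrix.vecMul γv (D⁻¹ * D) := by
        rw [Matrix.smul_vecMul, Matrix.vecMul_vecMul]
      rw [this, hinv, hED, Matrix.vecMul_one]
end

section
/- Let B, V be n×n real matrices with V invertible, let s be a nonzero real, and let i ∈ ℝⁿ be a nonzero row vector such that i·(s·B − V) = 0. Then 1/s is an eigenvalue of B·V⁻¹, i.e. det(B·V⁻¹ − (1/s)·I) = 0. If moreover B = b·α for a column vector b and a row vector α (so B has rank at most one), then 1/s = α·V⁻¹·b; in particular, setting 𝓡 = α·V⁻¹·b, the susceptible fraction of any endemic equilibrium equals s = 1/𝓡. -/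
open Matrix

/-- Endemic equilibria of the SIRS-FA model: if i ≠ 0 is a row vector with
i·(s·B − V) = 0, s ≠ 0 and V invertible, then 1/s is an eigenvalue of B·V⁻¹,
i.e. det(B·V⁻¹ − (1/s)·I) = 0; if moreover B = b·α has rank one, then
1/s = α·V⁻¹·b = 𝓡. -/
theorem stmt11 {n : ℕ} (B V : Matrix (Fin n) (Fin n) ℝ) (hV : IsUnit V)
    (s : ℝ) (hs : s ≠ 0) (i : Fin n → ℝ) (hi : i ≠ 0)
    (h : Matrix.vecMul i (s • B - V) = 0) :
    (B * V⁻¹ - (1 / s) • (1 : Matrix (Fin n) (Fin n) ℝ)).det = 0 ∧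
    ∀ (b α : Fin n → ℝ), B = Matrix.vecMulVec b α → 1 / s = α ⬝ᵥ V⁻¹.mulVec b := by
  have hdet : IsUnit V.det := (Matrix.isUnit_iff_isUnit_det V).mp hV
  have hsmulmat : ∀ (c : ℝ) (M : Matrix (Fin n) (Fin n) ℝ) (v : Fin n → ℝ),
      Matrix.vecMul v (c • M) = c • Matrix.vecMul v M := by
    intro c M v
    funext j
    simp [Matrix.vecMul, dotProduct, Finset.mul_sum, mul_left_comm]
  have h1 : s • Matrix.vecMul i B = Matrix.vecMul i V := by
    have h' := sub_eq_zero.mp (by rwa [Matrix.vecMul_sub] at h)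
    rw [hsmulmat] at h'
    exact h'
  have h2 : s • Matrix.vecMul i (B * V⁻¹) = i := by
    rw [← Matrix.vecMul_vecMul, ← Matrix.smul_vecMul, h1, Matrix.vecMul_vecMul,
      Matrix.mul_nonsing_inv V hdet, Matrix.vecMul_one]
  have h3 : Matrix.vecMul i (B * V⁻¹) = (1 / s) • i := by
    have h' : (1 / s) • (s • Matrix.vecMul i (B * V⁻¹)) = (1 / s) • i := by rw [h2]
    rw [smul_smul, one_div, inv_mul_cancel₀ hs, one_smul] at h'; rw [h', one_div]
  constructor
  · rw [← Matrix.exists_vecMul_eq_zero_iff]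
    refine ⟨i, hi, ?_⟩
    rw [Matrix.vecMul_sub, h3, hsmulmat, Matrix.vecMul_one, sub_self]
  · intro b α hB
    have hvmv : Matrix.vecMul i (Matrix.vecMulVec b α) = (i ⬝ᵥ b) • α := by
      funext j
      simp [Matrix.vecMul, Matrix.vecMulVec, dotProduct, Finset.sum_mul, mul_assoc]
    have h4 := h2
    rw [hB, ← Matrix.vecMul_vecMul, hvmv, Matrix.smul_vecMul, smul_smul] at h4
    have hib : i ⬝ᵥ b ≠ 0 := by
      intro h0
      apply hi
      rw [← h4, h0, mul_zero, zero_smul]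
    have h5 : (s * (i ⬝ᵥ b)) * (Matrix.vecMul α V⁻¹ ⬝ᵥ b) = i ⬝ᵥ b := by
      have := congrArg (fun v => v ⬝ᵥ b) h4
      simpa [smul_dotProduct] using this
    rw [← Matrix.dotProduct_mulVec] at h5
    have h6 : s * (α ⬝ᵥ V⁻¹.mulVec b) = 1 := by
      have key : s * (α ⬝ᵥ V⁻¹.mulVec b) * (i ⬝ᵥ b) = 1 * (i ⬝ᵥ b) := by
        linear_combination h5
      exact mul_right_cancel₀ hib key
    rw [eq_comm, eq_div_iff hs]
    linear_combination h6
end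

section
/- Let A be an n×n Markovian subgenerator, ν ∈ ℝⁿ, μ > 0, Λ ≥ 0, γ_s ≥ 0, γ_r ≥ 0, ν_r ≥ 0 with γ_r + ν_r + μ > 0. Set V = Diag(ν + μ·1) − A (assumed invertible), a = (−A)·1, b ∈ ℝⁿ a column vector, α ∈ ℝⁿ a row vector, 𝓡 = α·V⁻¹·b, and assume 𝓡 ≠ 0. Suppose (s, i, r) with i ∈ ℝⁿ a row vector, s, r ∈ ℝ, satisfies the fixed point equations: s = 1/𝓡, Λ − (μ + γ_s)·s + γ_r·r − s·(i·b) = 0, and s·γ_s + i·a − r·(γ_r + ν_r + μ) = 0. Then i satisfies the normalization i·( b − 𝓡·a·γ_r/(γ_r + ν_r + μ) ) = Λ·𝓡 − μ + γ_s·( γ_r/(γ_r + ν_r + μ) − 1 ). -/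
open Matrix

/-- Normalization of the infected vector at the endemic equilibrium of the SIR-PH
pedagogical model with one recovered class: if s = 1/𝓡 and (s,i,r) satisfies the
susceptible and recovered fixed-point equations, then
i·(b − 𝓡·γ_r/(γ_r+ν_r+μ)·a) = Λ·𝓡 − μ + γ_s·(γ_r/(γ_r+ν_r+μ) − 1). -/
theorem stmt12 {n : ℕ} (A : Matrix (Fin n) (Fin n) ℝ)
    (hA1 : ∀ k l, k ≠ l → 0 ≤ A k l) (hA2 : ∀ k, ∑ l, A k l ≤ 0)
    (ν : Fin n → ℝ) (μ Λ γs γr νr : ℝ) (hμ : 0 < μ) (hΛ : 0 ≤ Λ)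
    (hγs : 0 ≤ γs) (hγr : 0 ≤ γr) (hνr : 0 ≤ νr) (hden : 0 < γr + νr + μ)
    (V : Matrix (Fin n) (Fin n) ℝ)
    (hVdef : V = Matrix.diagonal (fun k => ν k + μ) - A) (hV : IsUnit V)
    (b α : Fin n → ℝ) (a : Fin n → ℝ) (ha : a = (-A).mulVec 1)
    (R : ℝ) (hR : R = α ⬝ᵥ V⁻¹.mulVec b) (hR0 : R ≠ 0)
    (s r : ℝ) (i : Fin n → ℝ)
    (hfp1 : s = 1 / R)
    (hfp2 : Λ - (μ + γs) * s + γr * r - s * (i ⬝ᵥ b) = 0)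
    (hfp3 : s * γs + i ⬝ᵥ a - r * (γr + νr + μ) = 0) :
    i ⬝ᵥ (b - (R * γr / (γr + νr + μ)) • a)
      = Λ * R - μ + γs * (γr / (γr + νr + μ) - 1) := by
  have hd : (γr + νr + μ) ≠ 0 := ne_of_gt hden
  have hs : s * R = 1 := by rw [hfp1]; field_simp
  have hX : i ⬝ᵥ b = Λ * R - (μ + γs) + γr * r * R := by
    linear_combination (-R) * hfp2 - ((μ + γs) + i ⬝ᵥ b) * hs
  have hY : i ⬝ᵥ a = r * (γr + νr + μ) - s * γs := by linear_combination hfp3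
  rw [dotProduct_sub, dotProduct_smul, smul_eq_mul, hX, hY]
  field_simp
  linear_combination (γr * γs) * hs
end

section
/- Let Λ > 0, let γ⃗_s ∈ ℝᵖ be a row vector with nonnegative entries and γ_s = γ⃗_s·1, and let g_r ∈ ℝᵖ be a column vector with nonnegative entries. Then the p×p matrix M = (Λ + γ_s)·Diag(g_r + Λ·1) − g_r·γ⃗_s is invertible, and the row vector r_dfe := Λ·γ⃗_s·M⁻¹ together with s_dfe := (Λ + r_dfe·g_r)/(Λ + γ_s) satisfy the disease-free equilibrium equations Λ = (Λ + γ_s)·s_dfe − r_dfe·g_r and s_dfe·γ⃗_s = r_dfe·Diag(g_r + Λ·1). -/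
open Matrix

private lemma vecMul_vecMulVec_aux {p : ℕ} (v w u : Fin p → ℝ) :
    Matrix.vecMul v (Matrix.vecMulVec w u) = (v ⬝ᵥ w) • u := by
  ext i
  simp [Matrix.vecMul, Matrix.vecMulVec, dotProduct, Finset.sum_mul, mul_assoc]

private lemma vecMul_smulMat_aux {p : ℕ} (a : ℝ) (v : Fin p → ℝ)
    (A : Matrix (Fin p) (Fin p) ℝ) :
    Matrix.vecMul v (a • A) = a • Matrix.vecMul v A := by
  ext i
  simp [Matrix.vecMul, dotProduct, Finset.mul_sum, mul_left_comm]

/-- Common disease-free equilibrium of the scaled matrix SIR/V+S model and its IA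
and FA approximations (case ν_r = 0, Λ = μ): the matrix
M = (Λ+γ_s)·Diag(g_r + Λ·1) − g_r·γ⃗_s is invertible, and r_dfe = Λ·γ⃗_s·M⁻¹ with
s_dfe = (Λ + r_dfe·g_r)/(Λ+γ_s) satisfy the DFE equations. -/
theorem stmt14 {p : ℕ} (Λ : ℝ) (hΛ : 0 < Λ) (γv gr : Fin p → ℝ)
    (hγ : ∀ j, 0 ≤ γv j) (hgr : ∀ j, 0 ≤ gr j)
    (γs : ℝ) (hγs : γs = ∑ j, γv j)
    (M : Matrix (Fin p) (Fin p) ℝ)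
    (hM : M = (Λ + γs) • Matrix.diagonal (fun j => gr j + Λ) - Matrix.vecMulVec gr γv) :
    IsUnit M ∧
    (Λ = (Λ + γs) * ((Λ + (Λ • Matrix.vecMul γv M⁻¹) ⬝ᵥ gr) / (Λ + γs))
        - (Λ • Matrix.vecMul γv M⁻¹) ⬝ᵥ gr) ∧
    ((Λ + (Λ • Matrix.vecMul γv M⁻¹) ⬝ᵥ gr) / (Λ + γs)) • γv
      = Matrix.vecMul (Λ • Matrix.vecMul γv M⁻¹)
          (Matrix.diagonal (fun j => gr j + Λ)) := by
  have hγs0 : 0 ≤ γs := hγs ▸ Finset.sum_nonneg fun j _ => hγ j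
  have hc : 0 < Λ + γs := by linarith
  have hcne : Λ + γs ≠ 0 := ne_of_gt hc
  set d : Fin p → ℝ := fun j => (Λ + γs) * (gr j + Λ) with hd
  have hdpos : ∀ j, 0 < d j := fun j => mul_pos hc (by linarith [hgr j])
  have hDb : (Λ + γs) • Matrix.diagonal (fun j => gr j + Λ) = Matrix.diagonal d := by
    rw [← Matrix.diagonal_smul]; congr 1
  have hDdet : (Matrix.diagonal d).det = ∏ j, d j := Matrix.det_diagonal
  have hDunit : IsUnit (Matrix.diagonal d).det := by
    rw [hDdet, isUnit_iff_ne_zero]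
    exact ne_of_gt (Finset.prod_pos fun j _ => hdpos j)
  have hfac : M = Matrix.diagonal d *
      (1 - (Matrix.diagonal d)⁻¹ * (Matrix.replicateCol Unit gr * Matrix.replicateRow Unit γv)) := by
    rw [Matrix.mul_sub, Matrix.mul_one, ← Matrix.mul_assoc,
      Matrix.mul_nonsing_inv _ hDunit, Matrix.one_mul, hM, hDb,
      Matrix.vecMulVec_eq Unit]
  have hinvD : (Matrix.diagonal d)⁻¹ = Matrix.diagonal (fun j => (d j)⁻¹) := by
    apply Matrix.inv_eq_right_inv
    rw [Matrix.diagonal_mul_diagonal]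
    convert Matrix.diagonal_one
    exact mul_inv_cancel₀ (ne_of_gt (hdpos _))
  have hdet1 : (1 - Matrix.replicateRow Unit γv * ((Matrix.diagonal d)⁻¹ * Matrix.replicateCol Unit gr)).det
      = 1 - ∑ j, γv j * ((d j)⁻¹ * gr j) := by
    rw [Matrix.det_unique, hinvD]
    simp [Matrix.mul_apply, dotProduct, Matrix.diagonal,
      Matrix.replicateRow, Matrix.replicateCol, Ring.inverse_eq_inv, Function.comp]
  have hbound : ∑ j, γv j * ((d j)⁻¹ * gr j) < 1 := by
    have h1 : ∀ j ∈ Finset.univ, γv j * ((d j)⁻¹ * gr j) ≤ γv j / (Λ + γs) := by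
      intro j _
      have h2 : (d j)⁻¹ * gr j ≤ (Λ + γs)⁻¹ := by
        rw [hd, mul_inv]
        have : (gr j + Λ)⁻¹ * gr j ≤ 1 := by
          rw [inv_mul_le_one₀ (by linarith [hgr j])]; linarith [hgr j]
        calc (Λ + γs)⁻¹ * (gr j + Λ)⁻¹ * gr j = (Λ + γs)⁻¹ * ((gr j + Λ)⁻¹ * gr j) := by ring
          _ ≤ (Λ + γs)⁻¹ * 1 := by
              exact mul_le_mul_of_nonneg_left this (le_of_lt (inv_pos.mpr hc))
          _ = (Λ + γs)⁻¹ := mul_one _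
      calc γv j * ((d j)⁻¹ * gr j) ≤ γv j * (Λ + γs)⁻¹ :=
            mul_le_mul_of_nonneg_left h2 (hγ j)
        _ = γv j / (Λ + γs) := by rw [div_eq_mul_inv]
    calc ∑ j, γv j * ((d j)⁻¹ * gr j) ≤ ∑ j, γv j / (Λ + γs) := Finset.sum_le_sum h1
      _ = γs / (Λ + γs) := by rw [← Finset.sum_div, hγs]
      _ < 1 := by rw [div_lt_one hc]; linarith
  have hMunit : IsUnit M := by
    rw [Matrix.isUnit_iff_isUnit_det, isUnit_iff_ne_zero, hfac, Matrix.det_mul,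
      ← Matrix.mul_assoc, Matrix.det_one_sub_mul_comm, hdet1]
    refine mul_ne_zero ?_ (by linarith)
    rw [Matrix.det_diagonal]
    exact ne_of_gt (Finset.prod_pos fun j _ => hdpos j)
  refine ⟨hMunit, ?_, ?_⟩
  · rw [mul_div_cancel₀ _ hcne]; ring
  · set r : Fin p → ℝ := Λ • Matrix.vecMul γv M⁻¹ with hr
    have hMdet : IsUnit M.det := (Matrix.isUnit_iff_isUnit_det M).mp hMunit
    have hkey : Matrix.vecMul r M = Λ • γv := by
      rw [hr, Matrix.smul_vecMul, Matrix.vecMul_vecMul, Matrix.nonsing_inv_mul _ hMdet,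
        Matrix.vecMul_one]
    have hexp : Matrix.vecMul r M
        = (Λ + γs) • Matrix.vecMul r (Matrix.diagonal fun j => gr j + Λ)
          - (r ⬝ᵥ gr) • γv := by
      rw [hM, Matrix.vecMul_sub, vecMul_vecMulVec_aux, vecMul_smulMat_aux]
    have hmain : (Λ + γs) • Matrix.vecMul r (Matrix.diagonal fun j => gr j + Λ)
        = (Λ + r ⬝ᵥ gr) • γv := by
      have := hexp.symm.trans hkey
      rw [sub_eq_iff_eq_add] at this
      rw [this, add_smul, add_comm]
    calc ((Λ + r ⬝ᵥ gr) / (Λ + γs)) • γv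
        = (Λ + γs)⁻¹ • ((Λ + r ⬝ᵥ gr) • γv) := by
          rw [smul_smul, div_eq_inv_mul]
      _ = (Λ + γs)⁻¹ • ((Λ + γs) • Matrix.vecMul r (Matrix.diagonal fun j => gr j + Λ)) := by
          rw [hmain]
      _ = Matrix.vecMul r (Matrix.diagonal fun j => gr j + Λ) := inv_smul_smul₀ hcne _
end

section
/- Let A be an n×n Markovian subgenerator, ν ∈ ℝⁿ a nonnegative column vector, Λ > 0, b ∈ ℝⁿ a column vector, α ∈ ℝⁿ a row vector, B = b·α, V = Diag(ν + Λ·1) − A (assumed invertible), 𝓡 = α·V⁻¹·b ≠ 0, W an n×p nonnegative matrix, γ⃗_s ∈ ℝᵖ a nonnegative row vector with sum γ_s, and g_r ∈ ℝᵖ a nonnegative column vector. Suppose (s, i, r), with s ∈ ℝ nonzero, i ∈ ℝⁿ a nonzero row vector, and r ∈ ℝᵖ a row vector, is a fixed point of the intermediate approximation with ν_r = 0, i.e.: 0 = Λ − (Λ + γ_s)·s + r·g_r − s·i·(b − ν); 0 = i·(s·B + A − Diag(ν) − Λ·I); 0 = s·γ⃗_s + i·W − r·Diag(g_r + (Λ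 − i·ν)·1); and assume Diag(g_r + (Λ − i·ν)·1) is invertible. Then s = 1/𝓡, r = (s·γ⃗_s + i·W)·Diag(g_r + (Λ − i·ν)·1)⁻¹, and i satisfies the normalization i·(b − ν) − 𝓡·i·W·Diag(g_r + (Λ − i·ν)·1)⁻¹·g_r = Λ·(𝓡 − 1) − γ_s + γ⃗_s·Diag(g_r + (Λ − i·ν)·1)⁻¹·g_r. -/
open Matrix

/-- Endemic equilibrium of the intermediate approximation (IA) of the scaled SIR-PH
model with ν_r = 0 and birth rate = death rate Λ: at any fixed point with i ≠ 0,
s = 1/𝓡, r = (s·γ⃗_s + i·W)·D⁻¹ with D = Diag(g_r + (Λ − i·ν)·1), and i satisfies the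
normalization i·(b−ν) − 𝓡·i·W·D⁻¹·g_r = Λ(𝓡−1) − γ_s + γ⃗_s·D⁻¹·g_r. -/
theorem stmt16 {n p : ℕ} (A : Matrix (Fin n) (Fin n) ℝ)
    (hA1 : ∀ k l, k ≠ l → 0 ≤ A k l) (hA2 : ∀ k, ∑ l, A k l ≤ 0)
    (ν : Fin n → ℝ) (hν : ∀ k, 0 ≤ ν k) (Λ : ℝ) (hΛ : 0 < Λ)
    (b α : Fin n → ℝ) (B : Matrix (Fin n) (Fin n) ℝ) (hB : B = Matrix.vecMulVec b α)
    (V : Matrix (Fin n) (Fin n) ℝ)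
    (hVdef : V = Matrix.diagonal (fun k => ν k + Λ) - A) (hV : IsUnit V)
    (R : ℝ) (hR : R = α ⬝ᵥ V⁻¹.mulVec b) (hR0 : R ≠ 0)
    (W : Matrix (Fin n) (Fin p) ℝ) (hW : ∀ k j, 0 ≤ W k j)
    (γv : Fin p → ℝ) (hγ : ∀ j, 0 ≤ γv j) (γs : ℝ) (hγs : γs = ∑ j, γv j)
    (gr : Fin p → ℝ) (hgr : ∀ j, 0 ≤ gr j)
    (s : ℝ) (hs : s ≠ 0) (i : Fin n → ℝ) (hi : i ≠ 0) (r : Fin p → ℝ)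
    (D : Matrix (Fin p) (Fin p) ℝ)
    (hD : D = Matrix.diagonal (fun j => gr j + (Λ - i ⬝ᵥ ν)))
    (hDinv : IsUnit D)
    (heq1 : 0 = Λ - (Λ + γs) * s + r ⬝ᵥ gr - s * (i ⬝ᵥ (b - ν)))
    (heq2 : (0 : Fin n → ℝ) = Matrix.vecMul i
      (s • B + A - Matrix.diagonal ν - Λ • (1 : Matrix (Fin n) (Fin n) ℝ)))
    (heq3 : (0 : Fin p → ℝ) = s • γv + Matrix.vecMul i W - Matrix.vecMul r D) :
    s = 1 / R ∧
    r = Matrix.vecMul (s • γv + Matrix.vecMul i W) D⁻¹ ∧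
    i ⬝ᵥ (b - ν) - R * (Matrix.vecMul (Matrix.vecMul i W) D⁻¹ ⬝ᵥ gr)
      = Λ * (R - 1) - γs + (Matrix.vecMul γv D⁻¹ ⬝ᵥ gr) := by
  have hVV : V * V⁻¹ = 1 := Matrix.mul_nonsing_inv V ((Matrix.isUnit_iff_isUnit_det V).mp hV)
  have hDD : D * D⁻¹ = 1 := Matrix.mul_nonsing_inv D ((Matrix.isUnit_iff_isUnit_det D).mp hDinv)
  have hsmulMat : ∀ (c : ℝ) (v : Fin n → ℝ) (M : Matrix (Fin n) (Fin n) ℝ),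
      Matrix.vecMul v (c • M) = c • Matrix.vecMul v M := by
    intro c v M
    funext j
    simp [Matrix.vecMul, dotProduct, Finset.mul_sum]
    exact Finset.sum_congr rfl fun x _ => by ring
  have hM : s • B + A - Matrix.diagonal ν - Λ • (1 : Matrix (Fin n) (Fin n) ℝ)
      = s • B - V := by
    rw [hVdef]
    ext k l
    by_cases h : k = l <;>
      simp [Matrix.diagonal, Matrix.one_apply, h, Matrix.sub_apply, Matrix.add_apply] <;> ring
  have heq2' : Matrix.vecMul i V = s • Matrix.vecMul i B := by
    have h0 := heq2
    rw [hM, Matrix.vecMul_sub, hsmulMat] at h0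
    have h1 : s • Matrix.vecMul i B - Matrix.vecMul i V = 0 := h0.symm
    have := sub_eq_zero.mp h1
    exact this.symm
  have hvB : Matrix.vecMul i B = (i ⬝ᵥ b) • α := by
    rw [hB]
    funext j
    simp [Matrix.vecMul, Matrix.vecMulVec, dotProduct, Finset.sum_mul, mul_assoc]
  have hiV : Matrix.vecMul i V = (s * (i ⬝ᵥ b)) • α := by
    rw [heq2', hvB, smul_smul]
  have hib : i ⬝ᵥ b ≠ 0 := by
    intro h0
    apply hi
    have h1 : Matrix.vecMul i V = 0 := by rw [hiV, h0, mul_zero, zero_smul]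
    have h2 := congrArg (fun v => Matrix.vecMul v V⁻¹) h1
    simpa [Matrix.vecMul_vecMul, hVV, Matrix.zero_vecMul] using h2
  have hiexpr : i = (s * (i ⬝ᵥ b)) • Matrix.vecMul α V⁻¹ := by
    have h2 := congrArg (fun v => Matrix.vecMul v V⁻¹) hiV
    simpa [Matrix.vecMul_vecMul, hVV, Matrix.smul_vecMul] using h2
  have hsR : s * R = 1 := by
    have hd := congrArg (fun v => v ⬝ᵥ b) hiexpr
    simp only [smul_dotProduct, smul_eq_mul] at hd
    have hRd : Matrix.vecMul α V⁻¹ ⬝ᵥ b = R := by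
      rw [hR, Matrix.dotProduct_mulVec]
    rw [hRd] at hd
    have hz : (i ⬝ᵥ b) * (s * R - 1) = 0 := by linear_combination -hd
    rcases mul_eq_zero.mp hz with h | h
    · exact absurd h hib
    · linarith
  have hs1 : s = 1 / R := by
    rw [eq_div_iff hR0]
    exact hsR
  have hrD : Matrix.vecMul r D = s • γv + Matrix.vecMul i W := by
    have h1 : s • γv + Matrix.vecMul i W - Matrix.vecMul r D = 0 := heq3.symm
    exact (sub_eq_zero.mp h1).symm
  have hr : r = Matrix.vecMul (s • γv + Matrix.vecMul i W) D⁻¹ := by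
    have h2 := congrArg (fun v => Matrix.vecMul v D⁻¹) hrD
    simpa [Matrix.vecMul_vecMul, hDD] using h2
  refine ⟨hs1, hr, ?_⟩
  have hrgr : r ⬝ᵥ gr = s * (Matrix.vecMul γv D⁻¹ ⬝ᵥ gr)
      + (Matrix.vecMul (Matrix.vecMul i W) D⁻¹ ⬝ᵥ gr) := by
    rw [hr]
    simp [Matrix.add_vecMul, Matrix.smul_vecMul, add_dotProduct,
      smul_dotProduct]
  rw [hrgr] at heq1
  linear_combination R * heq1 + ((Matrix.vecMul γv D⁻¹ ⬝ᵥ gr) - i ⬝ᵥ (b - ν) - Λ - γs) * hsR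
end

section
/- Let g : ℝ → ℝ be continuous, and let n : ℝ → ℝ be differentiable with n'(t) = g(t)·(1 − n(t)) for all t ∈ ℝ. If n(t₀) = 1 for some t₀ ∈ ℝ, then n(t) = 1 for all t ∈ ℝ. -/
/-- Conservation of the scaled total population: if n' = g·(1 − n) with g continuous
and n(t₀) = 1 at some time t₀, then n ≡ 1. -/
theorem stmt17 (g n : ℝ → ℝ) (hg : Continuous g)
    (hn : ∀ t, HasDerivAt n (g t * (1 - n t)) t)
    (t₀ : ℝ) (h0 : n t₀ = 1) : ∀ t, n t = 1 := by
  set G : ℝ → ℝ := fun t => ∫ s in t₀..t, g s with hG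
  have hGd : ∀ t, HasDerivAt G (g t) t := fun t =>
    intervalIntegral.integral_hasDerivAt_right (hg.intervalIntegrable _ _)
      (hg.stronglyMeasurableAtFilter _ _) hg.continuousAt
  set F : ℝ → ℝ := fun t => (1 - n t) * Real.exp (G t) with hF
  have hFd : ∀ t, HasDerivAt F 0 t := by
    intro t
    have h1 : HasDerivAt (fun t => 1 - n t) (-(g t * (1 - n t))) t :=
      by simpa using (hn t).const_sub 1
    have h2 : HasDerivAt (fun t => Real.exp (G t)) (Real.exp (G t) * g t) t :=
      (Real.hasDerivAt_exp (G t)).comp t (hGd t)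
    have : HasDerivAt F _ t := h1.fun_mul h2
    convert this using 1
    ring
  have hconst : ∀ t, F t = F t₀ :=
    fun t => is_const_of_deriv_eq_zero (fun x => (hFd x).differentiableAt)
      (fun x => (hFd x).deriv) t t₀
  intro t
  have := hconst t
  simp only [hF, h0, sub_self, zero_mul] at this
  have hexp : Real.exp (G t) ≠ 0 := Real.exp_ne_zero _
  have : (1 : ℝ) - n t = 0 := by
    rcases mul_eq_zero.mp this with h | h
    · exact h
    · exact absurd h hexp
  linarith
end

section
/- Let A be an n×n real matrix, W an n×p real matrix, B an n×n real matrix with row-sums vector b = B·1, ν ∈ ℝⁿ and ν_r ∈ ℝᵖ column vectors, γ⃗_s ∈ ℝᵖ a row vector with sum γ_s, g_r ∈ ℝᵖ a column vector, and Λ, μ ∈ ℝ. Suppose S : ℝ → ℝ, I : ℝ → ℝⁿ (row vector), R : ℝ → ℝᵖ (row vector) are differentiable, N := S + I·1 + R·1 satisfies N(t) > 0 for all t, and they obey: S' = Λ·N − (S/N)·I·b − (γ_s + μ)·S + R·g_r; I' = I·((S/N)·B + A − Diag(ν + μ·1)); R' = I·W + γ⃗_s·S − R·Diag(g_r + ν_r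 + μ·1); N' = (Λ − μ)·N − I·ν − R·ν_r. Then the fractions s := S/N, i := I/N, r := R/N are differentiable and satisfy the scaled system: s' = Λ − (Λ + γ_s)·s + r·g_r − s·i·(b − ν) + s·(r·ν_r); i' = i·( s·B + (i·ν + r·ν_r)·I_n + A − Diag(ν + Λ·1) ); r' = s·γ⃗_s + i·W − r·( Diag(g_r + ν_r + Λ·1) − (i·ν + r·ν_r)·I_p ). -/
open Matrix

private lemma vecMul_smul_mat {m n : ℕ} (v : Fin m → ℝ) (c : ℝ)
    (M : Matrix (Fin m) (Fin n) ℝ) : v ᵥ* (c • M) = c • (v ᵥ* M) := by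
  ext j
  simp [Matrix.vecMul, dotProduct, Finset.mul_sum]
  exact Finset.sum_congr rfl fun i _ => by ring

/-- Derivation of the scaled equations of the matrix SIR/V+S model with linear birth
rate: if (S, I, R) obeys the unscaled system with total population N > 0, then the
fractions s = S/N, i = I/N, r = R/N obey the scaled system. -/
theorem stmt18 {n p : ℕ} (A B : Matrix (Fin n) (Fin n) ℝ)
    (W : Matrix (Fin n) (Fin p) ℝ)
    (ν : Fin n → ℝ) (νr : Fin p → ℝ) (γv : Fin p → ℝ) (gr : Fin p → ℝ) (Λ μ : ℝ)
    (γs : ℝ) (hγs : γs = ∑ j, γv j)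
    (b : Fin n → ℝ) (hb : b = B.mulVec 1)
    (S : ℝ → ℝ) (I : ℝ → Fin n → ℝ) (R : ℝ → Fin p → ℝ) (N : ℝ → ℝ)
    (hN : N = fun t => S t + (∑ k, I t k) + (∑ j, R t j))
    (hNpos : ∀ t, 0 < N t)
    (hS : ∀ t, HasDerivAt S
      (Λ * N t - (S t / N t) * (I t ⬝ᵥ b) - (γs + μ) * S t + R t ⬝ᵥ gr) t)
    (hI : ∀ t, HasDerivAt I
      (Matrix.vecMul (I t) ((S t / N t) • B + A - Matrix.diagonal (fun k => ν k + μ))) t)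
    (hR : ∀ t, HasDerivAt R
      (Matrix.vecMul (I t) W + S t • γv
        - Matrix.vecMul (R t) (Matrix.diagonal (fun j => gr j + νr j + μ))) t)
    (hN' : ∀ t, HasDerivAt N ((Λ - μ) * N t - I t ⬝ᵥ ν - R t ⬝ᵥ νr) t) :
    (∀ t, HasDerivAt (fun t => S t / N t)
      (Λ - (Λ + γs) * (S t / N t) + ((N t)⁻¹ • R t) ⬝ᵥ gr
        - (S t / N t) * (((N t)⁻¹ • I t) ⬝ᵥ (b - ν))
        + (S t / N t) * (((N t)⁻¹ • R t) ⬝ᵥ νr)) t) ∧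
    (∀ t, HasDerivAt (fun t => (N t)⁻¹ • I t)
      (Matrix.vecMul ((N t)⁻¹ • I t)
        ((S t / N t) • B
          + (((N t)⁻¹ • I t) ⬝ᵥ ν + ((N t)⁻¹ • R t) ⬝ᵥ νr) • (1 : Matrix (Fin n) (Fin n) ℝ)
          + A - Matrix.diagonal (fun k => ν k + Λ))) t) ∧
    (∀ t, HasDerivAt (fun t => (N t)⁻¹ • R t)
      ((S t / N t) • γv + Matrix.vecMul ((N t)⁻¹ • I t) W
        - Matrix.vecMul ((N t)⁻¹ • R t)
          (Matrix.diagonal (fun j => gr j + νr j + Λ)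
            - (((N t)⁻¹ • I t) ⬝ᵥ ν + ((N t)⁻¹ • R t) ⬝ᵥ νr)
              • (1 : Matrix (Fin p) (Fin p) ℝ))) t) := by

  refine ⟨?_, ?_, ?_⟩
  · intro t
    have hne : N t ≠ 0 := (hNpos t).ne'
    have h := (hS t).div (hN' t) hne
    refine h.congr_deriv ?_
    symm
    simp only [smul_dotProduct, dotProduct_sub, smul_eq_mul]
    field_simp
    ring
  · intro t
    have hne : N t ≠ 0 := (hNpos t).ne'
    have h := (((hN' t).inv hne).smul (hI t))
    refine h.congr_deriv ?_
    symm
    funext k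
    simp only [Matrix.smul_vecMul, Matrix.add_vecMul, Matrix.sub_vecMul,
      Matrix.vecMul_one, Matrix.vecMul_diagonal, vecMul_smul_mat, Matrix.vecMul_add, Matrix.vecMul_sub, Pi.add_apply, Pi.sub_apply, Pi.smul_apply,
      smul_eq_mul, smul_dotProduct, neg_div, Pi.inv_apply]
    field_simp
    ring
  · intro t
    have hne : N t ≠ 0 := (hNpos t).ne'
    have h := (((hN' t).inv hne).smul (hR t))
    refine h.congr_deriv ?_
    symm
    funext j
    simp only [Matrix.smul_vecMul, Matrix.add_vecMul, Matrix.sub_vecMul,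
      Matrix.vecMul_one, Matrix.vecMul_diagonal, vecMul_smul_mat, Matrix.vecMul_add, Matrix.vecMul_sub, Pi.add_apply, Pi.sub_apply, Pi.smul_apply,
      smul_eq_mul, smul_dotProduct, neg_div, Pi.inv_apply]
    field_simp
    ring
end

section
/- Let μ > 0, let γ⃗_s ∈ ℝᵖ be a row vector with nonnegative entries and γ_s = γ⃗_s·1, and let g_r, ν_r ∈ ℝᵖ be column vectors with nonnegative entries. Consider the (1+p)×(1+p) block matrix M = [ [μ + γ_s, γ⃗_s], [−g_r, −Diag(g_r + ν_r + μ·1)] ]. Then (−1)^p · det M > 0; in particular M is invertible. -/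
open Matrix

/-- The coefficient matrix of the linear system determining the disease-free
equilibrium of the pedagogical SIRS-FA model with p recovered classes:
M = [[μ+γ_s, γ⃗_s], [−g_r, −Diag(g_r+ν_r+μ·1)]] satisfies (−1)^p·det M > 0;
in particular M is invertible. -/
theorem stmt19 {p : ℕ} (μ : ℝ) (hμ : 0 < μ) (γv gr νr : Fin p → ℝ)
    (hγ : ∀ j, 0 ≤ γv j) (hgr : ∀ j, 0 ≤ gr j) (hνr : ∀ j, 0 ≤ νr j)
    (γs : ℝ) (hγs : γs = ∑ j, γv j)
    (M : Matrix (Unit ⊕ Fin p) (Unit ⊕ Fin p) ℝ)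
    (hM : M = Matrix.fromBlocks
      (Matrix.of fun _ _ => μ + γs)
      (Matrix.of fun _ j => γv j)
      (Matrix.of fun j _ => -gr j)
      (-(Matrix.diagonal (fun j => gr j + νr j + μ)))) :
    0 < (-1 : ℝ) ^ p * M.det ∧ IsUnit M := by
  set d : Fin p → ℝ := fun j => gr j + νr j + μ with hd
  have hdpos : ∀ j, 0 < d j := fun j => by
    have := hgr j; have := hνr j; simp only [hd]; linarith
  have hDeq : -(Matrix.diagonal d) = Matrix.diagonal (fun j => -d j) := by
    simp [Matrix.diagonal_neg]
  set e : Fin p → ℝ := fun j => (-d j)⁻¹ with he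
  have hmul : ∀ j, (-d j) * e j = 1 := fun j =>
    mul_inv_cancel₀ (by have := hdpos j; intro h; nlinarith)
  have hmul' : ∀ j, e j * (-d j) = 1 := fun j => by rw [mul_comm]; exact hmul j
  letI : Invertible (Matrix.diagonal (fun j => -d j)) :=
    ⟨Matrix.diagonal e, by
      rw [Matrix.diagonal_mul_diagonal]; ext i j
      by_cases h : i = j <;> simp [Matrix.diagonal, Matrix.one_apply, h, hmul' _],
     by
      rw [Matrix.diagonal_mul_diagonal]; ext i j
      by_cases h : i = j <;> simp [Matrix.diagonal, Matrix.one_apply, h, hmul _]⟩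
  have hdet : M.det = (Matrix.diagonal (fun j => -d j)).det *
      ((μ + γs) + ∑ j, γv j * e j * gr j) := by
    rw [hM, hDeq, Matrix.det_fromBlocks₂₂]
    congr 1
    have hinv : ⅟(Matrix.diagonal (fun j => -d j)) = Matrix.diagonal e := rfl
    rw [hinv, Matrix.det_unique]
    simp only [Matrix.sub_apply, Matrix.mul_apply, Matrix.mul_diagonal, Matrix.of_apply,
      Matrix.diagonal_apply, ite_mul, zero_mul, mul_ite, mul_zero, Finset.sum_ite_eq,
      Finset.sum_ite_eq', Finset.mem_univ, if_true]
    rw [sub_eq_add_neg, ← Finset.sum_neg_distrib]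
    congr 1
    exact Finset.sum_congr rfl fun j _ => by ring
  have hdetD : (Matrix.diagonal (fun j => -d j)).det = (-1 : ℝ)^p * ∏ j, d j := by
    rw [Matrix.det_diagonal,
      show (fun j => -d j) = fun j => (-1 : ℝ) * d j from funext fun j => (neg_one_mul _).symm,
      Finset.prod_mul_distrib, Finset.prod_const, Finset.card_univ, Fintype.card_fin]
  have hsc : 0 < (μ + γs) + ∑ j, γv j * e j * gr j := by
    have hterm : ∀ j ∈ Finset.univ, -γv j ≤ γv j * e j * gr j := by
      intro j _
      have h1 : γv j * e j * gr j = -(γv j * (gr j / d j)) := by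
        simp only [he, inv_neg, div_eq_mul_inv]; ring
      rw [h1]
      have h2 : gr j / d j ≤ 1 := by
        rw [div_le_one (hdpos j)]
        have := hνr j; simp only [hd]; linarith
      have h3 : 0 ≤ gr j / d j := div_nonneg (hgr j) (hdpos j).le
      nlinarith [hγ j]
    have hsum := Finset.sum_le_sum hterm
    rw [Finset.sum_neg_distrib, ← hγs] at hsum
    linarith
  have hprod : 0 < ∏ j, d j := Finset.prod_pos (fun j _ => hdpos j)
  have key : 0 < (-1 : ℝ) ^ p * M.det := by
    rw [hdet, hdetD, ← mul_assoc, ← mul_assoc, ← mul_pow]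
    norm_num
    exact mul_pos hprod hsc
  refine ⟨key, ?_⟩
  have hne : M.det ≠ 0 := by
    intro h; rw [h, mul_zero] at key; exact lt_irrefl 0 key
  exact (Matrix.isUnit_iff_isUnit_det M).2 (isUnit_iff_ne_zero.2 hne)
end
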